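/- arXiv:1212.1733 — 8 statements merged into one kernel-verified Lean document; each statement's English description precedes it below -/
import Mathlib

section
/- Let d < 0 be a squarefree integer and let τ ∈ O_{Q(√d)} be an algebraic integer with trace Tr(τ) = 1. If τ is associated (differs by a unit of O_{Q(√d)}) with a p-th power in O_{Q(√d)} for some odd prime p, then τ is a unit of O_{Q(√d)}. -/
/-!
Every unit of an imaginary quadratic field is a root of unity of order dividing 4 or 6. Unless
`p = 3` and the unit is `±ω` with `ω` a primitive cube root of unity, the unit is itself a `p`-th
power (because `p² ≡ 1` modulo its order), so `τ = π ^ p`. With `π'` the conjugate of `π`, we get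
`π ^ p + π' ^ p = Tr τ = 1`, so the rational integer `t = π + π'` divides `1`. For `t = 1`, the
identity `π ^ p + (1 - π) ^ p = 1 + p π (π y - 1)` makes `π` a unit; for `t = -1` the same identity
applied to `-π` makes `p` divide `2`.

In the remaining case `τ = ω x ^ 3`. Since the conjugate of `ω` is `ω²`, the integers
`m = N x` and `j = Tr (x ^ 3)` satisfy `3 m ^ 3 = j ^ 2 + j + 1`; then `j = 3 q + 1` and
`m ^ 3 + q ^ 3 = (q + 1) ^ 3`, so Fermat's Last Theorem for exponent `3` gives `m = 1`.
-/

open NumberField Algebra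

theorem pow_mul_self_eq_self {M : Type*} [Monoid M] {u : M} {n p : ℕ} (hu : u ^ n = 1)
    (hp : p * p % n = 1) : u ^ (p * p) = u := by
  rw [← Nat.div_add_mod (p * p) n, hp, pow_add, pow_mul, hu, one_pow, one_mul, pow_one]

theorem exists_pow_add_one_sub_pow_eq {R : Type*} [CommRing R] {p : ℕ} (hp : p.Prime)
    (hodd : Odd p) (x : R) : ∃ y, x ^ p + (1 - x) ^ p = 1 + p * x * (x * y - 1) := by
  obtain ⟨n, rfl⟩ : ∃ n, p = n + 3 := by
    obtain ⟨m, rfl⟩ := hodd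
    exact ⟨2 * m - 2, by have := hp.two_le; omega⟩
  refine ⟨∑ k ∈ Finset.range (n + 1), (-x) ^ k * ((n + 3).choose (k + 2) / (n + 3) : ℕ), ?_⟩
  have hmiddle : ∑ k ∈ Finset.range (n + 1), (-x) ^ (k + 1 + 1) * 1 ^ (n + 3 - (k + 1 + 1)) *
      ((n + 3).choose (k + 1 + 1) : R) = (n + 3 : ℕ) * x * (x * ∑ k ∈ Finset.range (n + 1),
        (-x) ^ k * ((n + 3).choose (k + 2) / (n + 3) : ℕ)) := by
    rw [Finset.mul_sum, Finset.mul_sum]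
    refine Finset.sum_congr rfl fun k hk => ?_
    obtain ⟨c, hc⟩ := hp.dvd_choose_self (k := k + 2) (by omega)
      (by rw [Finset.mem_range] at hk; omega)
    rw [hc, Nat.mul_div_cancel_left _ (by omega)]
    push_cast
    ring
  rw [sub_eq_neg_add, add_pow, Finset.sum_range_succ, Finset.sum_range_succ',
    Finset.sum_range_succ', hmiddle, hodd.neg_pow]
  simp only [Nat.cast_add, Nat.cast_ofNat, zero_add, pow_one, Nat.add_one_sub_one, one_pow,
    mul_one, Nat.choose_one_right, neg_mul, pow_zero, tsub_zero, Nat.choose_zero_right,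
    Nat.cast_one, tsub_self, Nat.choose_self, add_neg_cancel_comm_assoc]
  ring

theorem isUnit_of_add_eq_one_of_pow_add_pow_eq_one {R : Type*} [CommRing R] [IsDomain R]
    [CharZero R] {p : ℕ} (hp : p.Prime) (hodd : Odd p) {a b : R} (ha : a ≠ 0) (hab : a + b = 1)
    (h : a ^ p + b ^ p = 1) : IsUnit a := by
  obtain ⟨y, hy⟩ := exists_pow_add_one_sub_pow_eq hp hodd a
  rw [← eq_sub_of_add_eq' hab, h] at hy
  have : (p : R) * a * (a * y - 1) = 0 := by linear_combination -hy
  rcases mul_eq_zero.mp this with h | h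
  · simp [hp.ne_zero, ha] at h
  · exact .of_mul_eq_one y (sub_eq_zero.mp h)

theorem three_mul_eq_sq_add_self_add_one {R : Type*} [CommRing R] {ω s t : R}
    (hω : ω ^ 2 + ω + 1 = 0) (h : ω * s + ω ^ 2 * t = 1) :
    3 * (s * t) = (s + t) ^ 2 + (s + t) + 1 := by
  obtain rfl : t = ω - ω ^ 2 * s := by linear_combination ω * h - (ω - 1) * t * hω
  linear_combination (-(ω ^ 2 - ω + 1) * s ^ 2 + (2 * ω - 1) * s - 1) * hω

theorem Int.eq_one_of_three_mul_pow_three_eq {m j : ℤ} (h : 3 * m ^ 3 = j ^ 2 + j + 1) :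
    m = 1 := by
  have hj : ((j - 1 : ℤ) : ZMod 3) = 0 := by
    have h' := congrArg (Int.cast : ℤ → ZMod 3) h
    push_cast at h' ⊢
    generalize (j : ZMod 3) = y at h' ⊢
    generalize (m : ZMod 3) = z at h'
    revert y z
    decide
  obtain ⟨q, hq⟩ := (ZMod.intCast_zmod_eq_zero_iff_dvd _ 3).mp hj
  have hm : m ^ 3 = 3 * q ^ 2 + 3 * q + 1 := by
    rw [show j = 3 * q + 1 by omega] at h
    linarith
  have hfermat : m ^ 3 + q ^ 3 = (q + 1) ^ 3 := by linear_combination hm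
  have hm0 : 0 < m := by
    have : 0 < m ^ 3 := by nlinarith [sq_nonneg (2 * q + 1)]
    exact (Odd.pow_pos_iff (by decide)).mp this
  have hq : q = 0 ∨ q = -1 := by
    by_contra! hq
    exact fermatLastTheoremFor_iff_int.mp fermatLastTheoremThree m q (q + 1) hm0.ne'
      hq.1 (by omega) hfermat
  have : m ^ 3 = 1 := by rcases hq with rfl | rfl <;> simpa using hm
  exact (pow_eq_one_iff_of_nonneg hm0.le (by norm_num)).mp this

namespace Algebra.IsQuadraticExtension

variable (F K : Type*) [Field F] [Field K] [Algebra F K] [IsQuadraticExtension F K] [IsGalois F K]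

theorem card_algEquiv : Fintype.card Gal(K/F) = 2 := by
  rw [← Nat.card_eq_fintype_card, IsGalois.card_aut_eq_finrank, finrank_eq_two]

theorem exists_ne_one : ∃ σ : Gal(K/F), σ ≠ 1 :=
  Fintype.exists_ne_of_one_lt_card (by rw [card_algEquiv]; norm_num) 1

variable {F K} {σ : Gal(K/F)}

theorem eq_one_or_eq (hσ : σ ≠ 1) (f : Gal(K/F)) : f = 1 ∨ f = σ := by
  by_contra! h
  have := Fintype.two_lt_card_iff.mpr ⟨1, σ, f, hσ.symm, h.1.symm, h.2.symm⟩
  rw [card_algEquiv] at this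
  exact this.false

theorem algebraMap_trace (hσ : σ ≠ 1) (x : K) : algebraMap F K (trace F K x) = x + σ x := by
  rw [trace_eq_sum_automorphisms, Fintype.sum_eq_add 1 σ hσ.symm fun f hf =>
    (hf.2 ((eq_one_or_eq hσ f).resolve_left hf.1)).elim]
  rfl

theorem algebraMap_norm (hσ : σ ≠ 1) (x : K) : algebraMap F K (norm F x) = x * σ x := by
  rw [norm_eq_prod_automorphisms, Fintype.prod_eq_mul 1 σ hσ.symm fun f hf =>
    (hf.2 ((eq_one_or_eq hσ f).resolve_left hf.1)).elim]
  rfl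

theorem exists_algebraMap_eq_of_apply_eq (hσ : σ ≠ 1) {x : K} (hx : σ x = x) :
    ∃ r : F, algebraMap F K r = x := by
  refine (IsGalois.mem_range_algebraMap_iff_fixed x).mpr fun f => ?_
  rcases eq_one_or_eq hσ f with rfl | rfl
  · rfl
  · exact hx

theorem involutive (hσ : σ ≠ 1) : Function.Involutive σ := fun x => by
  have h := congrArg σ (algebraMap_trace hσ x)
  rw [AlgEquiv.commutes, algebraMap_trace hσ, map_add] at h
  linear_combination h.symm

section Ordered

variable [LinearOrder F] [IsStrictOrderedRing F] {d : F} {α : K}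

theorem apply_eq_neg_of_sq_eq (hσ : σ ≠ 1) (hd : d < 0) (hα : α ^ 2 = algebraMap F K d) :
    σ α = -α := by
  have h : (σ α - α) * (σ α + α) = 0 := by
    have := congrArg σ hα
    rw [map_pow, AlgEquiv.commutes, ← hα] at this
    linear_combination this
  rcases mul_eq_zero.mp h with h | h
  · obtain ⟨r, hr⟩ := exists_algebraMap_eq_of_apply_eq hσ (sub_eq_zero.mp h)
    have : r ^ 2 = d := (algebraMap F K).injective (by rw [map_pow, hr, hα])
    nlinarith [sq_nonneg r]
  · exact eq_neg_of_add_eq_zero_left h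

theorem exists_eq_mul_of_apply_eq_neg (hσ : σ ≠ 1) (hd : d < 0)
    (hα : α ^ 2 = algebraMap F K d) {y : K} (hy : σ y = -y) : ∃ c : F, y = algebraMap F K c * α := by
  have hα0 : α ≠ 0 := by
    rintro rfl
    exact hd.ne ((algebraMap F K).injective (by rw [← hα]; simp))
  obtain ⟨c, hc⟩ := exists_algebraMap_eq_of_apply_eq hσ (x := y / α)
    (by rw [map_div₀, hy, apply_eq_neg_of_sq_eq hσ hd hα, neg_div_neg_eq])
  exact ⟨c, by rw [hc, div_mul_cancel₀ _ hα0]⟩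

theorem sq_trace_le_four_mul_norm (hd : d < 0) (hα : α ^ 2 = algebraMap F K d) (x : K) :
    trace F K x ^ 2 ≤ 4 * norm F x := by
  obtain ⟨σ, hσ⟩ := exists_ne_one F K
  obtain ⟨c, hc⟩ := exists_eq_mul_of_apply_eq_neg hσ hd hα (y := x - σ x)
    (by rw [map_sub, involutive hσ x, neg_sub])
  have : trace F K x ^ 2 - 4 * norm F x = c ^ 2 * d := (algebraMap F K).injective <| by
    simp only [map_sub, map_mul, map_pow, map_ofNat, algebraMap_trace hσ, algebraMap_norm hσ,
      hα.symm]
    linear_combination (x - σ x + algebraMap F K c * α) * hc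
  nlinarith [sq_nonneg c]

theorem apply_eq_sq_of_sq_add_self_add_one (hσ : σ ≠ 1) {ω : K} (hω : ω ^ 2 + ω + 1 = 0) :
    σ ω = ω ^ 2 := by
  have h : (σ ω - ω) * (σ ω + ω + 1) = 0 := by
    have := congrArg σ hω
    simp only [map_add, map_pow, map_one, map_zero] at this
    linear_combination this - hω
  rcases mul_eq_zero.mp h with h | h
  · obtain ⟨r, hr⟩ := exists_algebraMap_eq_of_apply_eq hσ (sub_eq_zero.mp h)
    have : r ^ 2 + r + 1 = 0 := (algebraMap F K).injective (by simp [hr, hω])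
    nlinarith [sq_nonneg (2 * r + 1)]
  · linear_combination h - hω

end Ordered

end Algebra.IsQuadraticExtension

open Algebra.IsQuadraticExtension

namespace NumberField.RingOfIntegers

variable {K : Type*} [Field K] [NumberField K]

theorem intCast_dvd_intCast {a b : ℤ} : (a : 𝓞 K) ∣ (b : 𝓞 K) ↔ a ∣ b := by
  refine ⟨fun h => ?_, fun h => Int.cast_dvd_cast _ _ h⟩
  have := map_dvd (Algebra.norm ℤ (S := 𝓞 K)) h
  rwa [← eq_intCast (algebraMap ℤ (𝓞 K)), ← eq_intCast (algebraMap ℤ (𝓞 K)),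
    Algebra.norm_algebraMap, Algebra.norm_algebraMap,
    Int.pow_dvd_pow_iff Module.finrank_pos.ne'] at this

theorem pow_add_pow_ne_neg_one_of_add_eq_one {p : ℕ} (hp : p.Prime) (hodd : Odd p) {a b : 𝓞 K}
    (hab : a + b = 1) : a ^ p + b ^ p ≠ -1 := by
  intro h
  obtain ⟨y, hy⟩ := exists_pow_add_one_sub_pow_eq hp hodd a
  rw [← eq_sub_of_add_eq' hab, h] at hy
  have : ((p : ℤ) : 𝓞 K) ∣ ((2 : ℤ) : 𝓞 K) :=
    ⟨-(a * (a * y - 1)), by push_cast; linear_combination -hy⟩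
  obtain rfl := (Nat.prime_dvd_prime_iff_eq hp Nat.prime_two).mp
    (Int.natCast_dvd_natCast.mp (intCast_dvd_intCast.mp this))
  exact absurd hodd (by decide)

variable [IsQuadraticExtension ℚ K] {σ : Gal(K/ℚ)}

theorem intCast_trace (hσ : σ ≠ 1) (x : 𝓞 K) : ((trace ℤ (𝓞 K) x : ℤ) : K) = x + σ x := by
  rw [← algebraMap_trace hσ, ← Algebra.coe_trace_int, map_intCast]

theorem intCast_norm (hσ : σ ≠ 1) (x : 𝓞 K) : ((Algebra.norm ℤ x : ℤ) : K) = x * σ x := by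
  rw [← algebraMap_norm hσ, ← Algebra.coe_norm_int, map_intCast]

theorem isUnit_of_pow_eq_of_trace_eq_one {p : ℕ} (hp : p.Prime) (hodd : Odd p) {π τ : 𝓞 K}
    (hπ : π ^ p = τ) (htr : trace ℚ K (τ : K) = 1) : IsUnit τ := by
  obtain ⟨σ, hσ⟩ := exists_ne_one ℚ K
  obtain ⟨t, ht⟩ : ∃ t : ℤ, (t : K) = π + σ π := ⟨_, intCast_trace hσ π⟩
  have hadd : π + (t - π) = t := add_sub_cancel π _
  have hsum : π ^ p + ((t : 𝓞 K) - π) ^ p = 1 := by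
    have := algebraMap_trace hσ (τ : K)
    rw [htr, map_one, ← hπ] at this
    ext
    simp only [map_add, map_pow, map_sub, map_intCast, map_one] at this ⊢
    rw [this, ht, add_sub_cancel_left]
  have htunit : IsUnit t := by
    refine isUnit_of_dvd_one (intCast_dvd_intCast (K := K) |>.mp ?_)
    simpa [hadd, hsum] using hodd.add_dvd_pow_add_pow π ((t : 𝓞 K) - π)
  have hπ0 : π ≠ 0 := by
    rintro rfl
    simp [← hπ, hp.ne_zero] at htr
  rcases Int.isUnit_iff.mp htunit with rfl | rfl
  · rw [Int.cast_one] at hadd hsum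
    exact hπ ▸ (isUnit_of_add_eq_one_of_pow_add_pow_eq_one hp hodd hπ0 hadd hsum).pow p
  · refine absurd ?_ (pow_add_pow_ne_neg_one_of_add_eq_one hp hodd (a := -π) (b := -(-1 - π)) ?_)
    · push_cast at hsum
      rw [hodd.neg_pow, hodd.neg_pow, ← neg_add, hsum]
    · ring

theorem isUnit_of_eq_mul_pow_three_of_trace_eq_one {ω x τ : 𝓞 K} (hω : ω ^ 2 + ω + 1 = 0)
    (hτ : τ = ω * x ^ 3) (htr : trace ℚ K (τ : K) = 1) : IsUnit τ := by
  obtain ⟨σ, hσ⟩ := exists_ne_one ℚ K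
  have hωK : (ω : K) ^ 2 + ω + 1 = 0 := by exact_mod_cast congrArg (algebraMap (𝓞 K) K) hω
  have hsum : (ω : K) * (x : K) ^ 3 + (ω : K) ^ 2 * σ ((x : K) ^ 3) = 1 := by
    have := algebraMap_trace hσ (τ : K)
    rw [htr, map_one, hτ] at this
    simpa [map_mul, apply_eq_sq_of_sq_add_self_add_one hσ hωK] using this.symm
  have hnorm : 3 * norm ℤ x ^ 3 = trace ℤ (𝓞 K) (x ^ 3) ^ 2 + trace ℤ (𝓞 K) (x ^ 3) + 1 := by
    apply Int.cast_injective (α := K)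
    push_cast
    rw [intCast_norm hσ, intCast_trace hσ]
    simpa [mul_pow] using three_mul_eq_sq_add_self_add_one hωK hsum
  have hx : IsUnit x := by
    rw [isUnit_iff_norm, RingOfIntegers.coe_norm, ← Algebra.coe_norm_int,
      Int.eq_one_of_three_mul_pow_three_eq hnorm]
    simp
  have hωunit : IsUnit ω := .of_mul_eq_one (-ω - 1) (by linear_combination -hω)
  exact hτ ▸ hωunit.mul (hx.pow 3)

theorem unit_pow_four_eq_one_or_eq_mul {d : ℚ} {α : K} (hd : d < 0)
    (hα : α ^ 2 = algebraMap ℚ K d) (u : (𝓞 K)ˣ) :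
    (u : 𝓞 K) ^ 4 = 1 ∨ ∃ ε ω : 𝓞 K, ε ^ 2 = 1 ∧ ω ^ 2 + ω + 1 = 0 ∧ (u : 𝓞 K) = ε * ω := by
  obtain ⟨σ, hσ⟩ := exists_ne_one ℚ K
  have hquad : (u : 𝓞 K) ^ 2 - trace ℤ (𝓞 K) u * u + norm ℤ (u : 𝓞 K) = 0 := by
    ext
    simp only [map_add, map_sub, map_pow, map_mul, map_intCast, intCast_trace hσ,
      intCast_norm hσ, map_zero]
    ring
  have hle : trace ℤ (𝓞 K) u ^ 2 ≤ 4 * norm ℤ (u : 𝓞 K) := by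
    have := sq_trace_le_four_mul_norm hd hα (u : K)
    rw [← Algebra.coe_trace_int, ← Algebra.coe_norm_int] at this
    exact_mod_cast this
  have hnorm : norm ℤ (u : 𝓞 K) = 1 := by
    have := isUnit_iff_norm.mp u.isUnit
    rw [RingOfIntegers.coe_norm, ← Algebra.coe_norm_int] at this
    rcases abs_eq zero_le_one |>.mp (by exact_mod_cast this : |norm ℤ (u : 𝓞 K)| = 1) with h | h
    · exact h
    · nlinarith
  rw [hnorm] at hquad hle
  generalize trace ℤ (𝓞 K) u = t at hquad hle
  obtain ⟨ht₁, ht₂⟩ : -2 ≤ t ∧ t ≤ 2 := ⟨by nlinarith, by nlinarith⟩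
  push_cast at hquad
  interval_cases t
  · left
    have h : ((u : 𝓞 K) + 1) ^ 2 = 0 := by linear_combination hquad
    rw [eq_neg_of_add_eq_zero_left (pow_eq_zero_iff two_ne_zero |>.mp h)]
    norm_num
  · exact .inr ⟨1, u, one_pow 2, by linear_combination hquad, (one_mul _).symm⟩
  · exact .inl (by linear_combination ((u : 𝓞 K) ^ 2 - 1) * hquad)
  · exact .inr ⟨-1, -u, by norm_num, by linear_combination hquad, by ring⟩
  · left
    have h : ((u : 𝓞 K) - 1) ^ 2 = 0 := by linear_combination hquad
    rw [sub_eq_zero.mp (pow_eq_zero_iff two_ne_zero |>.mp h)]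
    norm_num

end NumberField.RingOfIntegers

open NumberField.RingOfIntegers

theorem stmt_1_general (d : ℤ) (hd : d < 0)
    (K : Type) [Field K] [NumberField K] (α : K) (hα : α ^ 2 = (d : K))
    (hrank : Module.finrank ℚ K = 2)
    (τ : NumberField.RingOfIntegers K)
    (htr : Algebra.trace ℚ K (τ : K) = 1)
    (p : ℕ) (hp : p.Prime) (hpodd : Odd p)
    (ρ : NumberField.RingOfIntegers K) (hassoc : Associated (ρ ^ p) τ) :
    IsUnit τ := by
  have : IsQuadraticExtension ℚ K := ⟨hrank⟩
  obtain ⟨u, rfl⟩ := hassoc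
  have hp_mod_two := Nat.odd_iff.mp hpodd
  have of_pow_mul_self : (u : 𝓞 K) ^ (p * p) = u → IsUnit (ρ ^ p * (u : 𝓞 K)) := fun hu =>
    isUnit_of_pow_eq_of_trace_eq_one hp hpodd (π := ρ * (u : 𝓞 K) ^ p)
      (by rw [mul_pow, ← pow_mul, hu]) htr
  rcases unit_pow_four_eq_one_or_eq_mul (d := d) (by exact_mod_cast hd)
    (by rw [hα, map_intCast]) u with hu | ⟨ε, ω, hε, hω, hu⟩
  · refine of_pow_mul_self (pow_mul_self_eq_self hu ?_)
    rcases (by omega : p % 4 = 1 ∨ p % 4 = 3) with h | h <;> simp [Nat.mul_mod, h]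
  · by_cases hp3 : p = 3
    · subst hp3
      exact isUnit_of_eq_mul_pow_three_of_trace_eq_one hω (x := ε * ρ)
        (by rw [hu]; linear_combination (-(ω * ρ ^ 3 * ε)) * hε) htr
    · have hu6 : (u : 𝓞 K) ^ 6 = 1 := by
        rw [hu]
        linear_combination ω ^ 6 * (ε ^ 4 + ε ^ 2 + 1) * hε + (ω - 1) * (ω ^ 3 + 1) * hω
      have h3 : ¬ 3 ∣ p := fun h => hp3 ((Nat.prime_dvd_prime_iff_eq Nat.prime_three hp).mp h).symm
      refine of_pow_mul_self (pow_mul_self_eq_self hu6 ?_)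
      rcases (by omega : p % 6 = 1 ∨ p % 6 = 5) with h | h <;> simp [Nat.mul_mod, h]

theorem stmt_1 (d : ℤ) (hd : d < 0) (hsq : Squarefree d)
    (K : Type) [Field K] [NumberField K] (α : K) (hα : α ^ 2 = (d : K))
    (hrank : Module.finrank ℚ K = 2)
    (τ : NumberField.RingOfIntegers K)
    (htr : Algebra.trace ℚ K (τ : K) = 1)
    (p : ℕ) (hp : p.Prime) (hpodd : Odd p)
    (ρ : NumberField.RingOfIntegers K) (hassoc : Associated (ρ ^ p) τ) :
    IsUnit τ :=
  stmt_1_general d hd K α hα hrank τ htr p hp hpodd ρ hassoc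
end

section
/- The equation x² + 1 = 2y^z has no positive integer solutions (x, y, z) with y > 1 and z an odd integer greater than 1. -/
/-!
Write `x = 2m + 1`. In `ℤ[i]`, `x + i = (1 + i) β` with `β = (m + 1) - m i`; the factors `β` and
`β̄` are coprime with `β β̄ = y ^ z`, and for odd `z` every unit is a `z`-th power, so `β = w ^ z`
with `N w = y`. With `z = 2M + 1`, one of `g = 1 ± i` satisfies `g ^ z = s (1 + i)` with
`|s| = 2 ^ M`, so `u = g w = p + q i` has odd coordinates, norm `2 y`, and `Im (u ^ z) = s`.
As `q ∣ Im (u ^ z)`, `q = ±1`, and everything reduces to: for odd `c`, `|Im ((c + i) ^ z)| = 2 ^ M`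
forces `c = ±1`; then `2 y = p ^ 2 + q ^ 2 = 2`.

For the last step take `c ≡ 1 mod 4` and expand `Im ((t + (1 + i)) ^ z)` binomially in
`t = c - 1 = 2 ^ v t₀`, `v ≥ 2`. The constant term is `Im ((1 + i) ^ z) = ±2 ^ M`, while the
remaining terms add up to `2 ^ e` times an odd number with `e ≥ M + 2`: the linear term carries the
valuation when `M` is odd, and the quadratic term when `M` is even (then the linear term vanishes).
But both `Im ((c + i) ^ z)` and the constant term have absolute value `2 ^ M`, so they differ by at
most `2 ^ (M + 1)`.
-/

open Finset

local notation "ℤ[i]" => GaussianInt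

theorem isCoprime_of_mul_eq_two_mul_add_one {R : Type*} [CommRing R] {a b u v k : R}
    (h2 : u * a + v * b = 2) (hab : a * b = 2 * k + 1) : IsCoprime a b :=
  ⟨b - k * u, -(k * v), by linear_combination hab - k * h2⟩

theorem Int.exists_eq_two_pow_mul_odd {t : ℤ} (ht : t ≠ 0) :
    ∃ v t₀, Odd t₀ ∧ t = 2 ^ v * t₀ := by
  obtain ⟨v, t₀, ht₀, habs⟩ := Nat.exists_eq_two_pow_mul_odd (Int.natAbs_ne_zero.mpr ht)
  have ht₀' : Odd (t₀ : ℤ) := by exact_mod_cast ht₀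
  rcases Int.natAbs_eq t with h | h
  · exact ⟨v, t₀, ht₀', by rw [h, habs]; push_cast; ring⟩
  · exact ⟨v, -t₀, ht₀'.neg, by rw [h, habs]; push_cast; ring⟩

theorem Int.neg_four_pow (N : ℕ) : (-4 : ℤ) ^ N = (-1) ^ N * 2 ^ (2 * N) := by
  rw [pow_mul, ← mul_pow]; norm_num

theorem Int.exists_add_two_pow_mul_odd {b u : ℤ} {e : ℕ} (hb : 2 ^ (e + 1) ∣ b) (hu : Odd u) :
    ∃ u', Odd u' ∧ b + 2 ^ e * u = 2 ^ e * u' := by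
  obtain ⟨r, rfl⟩ := hb
  exact ⟨2 * r + u, Even.add_odd (even_two_mul r) hu, by ring⟩

theorem Int.abs_eq_one_of_odd_of_dvd_two_pow {q : ℤ} {M : ℕ} (hq : Odd q) (h : q ∣ 2 ^ M) :
    |q| = 1 := by
  have := ((Int.isCoprime_two_right.mpr hq).pow_right (n := M)).isUnit_of_dvd' dvd_rfl h
  rcases Int.isUnit_iff.mp this with rfl | rfl <;> rfl

theorem Int.odd_of_sq_add_one_eq_two_mul {x a : ℤ} (h : x ^ 2 + 1 = 2 * a) : Odd x ∧ Odd a := by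
  rcases Int.even_or_odd' x with ⟨m, rfl | rfl⟩
  · exact absurd (by linarith) (show 2 * (a - 2 * m ^ 2) ≠ 1 by omega)
  · exact ⟨odd_two_mul_add_one m, ⟨m ^ 2 + m, by linarith⟩⟩

theorem Int.odd_and_odd_of_sq_add_sq_eq {p q Y : ℤ} (hY : Odd Y) (h : p ^ 2 + q ^ 2 = 2 * Y) :
    Odd p ∧ Odd q := by
  obtain ⟨c, rfl⟩ := hY
  have two_mul_ne_one : ∀ k : ℤ, 2 * k ≠ 1 := by omega
  rcases Int.even_or_odd' p with ⟨a, rfl | rfl⟩ <;> rcases Int.even_or_odd' q with ⟨b, rfl | rfl⟩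
  · exact absurd (by linarith) (two_mul_ne_one (a ^ 2 + b ^ 2 - c))
  · exact absurd (by linarith) (two_mul_ne_one (2 * a ^ 2 + 2 * b ^ 2 + 2 * b - 2 * c))
  · exact absurd (by linarith) (two_mul_ne_one (2 * a ^ 2 + 2 * a + 2 * b ^ 2 - 2 * c))
  · exact ⟨odd_two_mul_add_one a, odd_two_mul_add_one b⟩

theorem padicValNat_two_add_padicValNat_two_succ_le (n : ℕ) :
    padicValNat 2 n + padicValNat 2 (n + 1) ≤ n := by
  have hlt : ∀ m, m ≠ 0 → padicValNat 2 m < m := fun m hm =>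
    (padicValNat_le_nat_log m).trans_lt (Nat.log_lt_self 2 hm)
  have hodd : ∀ m, Odd m → padicValNat 2 m = 0 := fun m hm =>
    padicValNat.eq_zero_of_not_dvd (by rwa [← even_iff_two_dvd, Nat.not_even_iff_odd])
  rcases Nat.even_or_odd n with hn | hn
  · rw [hodd (n + 1) hn.add_one]
    rcases n.eq_zero_or_pos with rfl | hpos
    · simp
    · have := hlt n hpos.ne'; omega
  · rw [hodd n hn]
    have := hlt (n + 1) n.succ_ne_zero; omega

theorem Nat.choose_mul_mul_pred {n k : ℕ} (hk : 2 ≤ k) (hkn : k ≤ n) :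
    n.choose k * k * (k - 1) = n * (n - 1) * (n - 2).choose (k - 2) := by
  obtain ⟨n, rfl⟩ : ∃ m, n = m + 2 := ⟨n - 2, by omega⟩
  obtain ⟨k, rfl⟩ : ∃ j, k = j + 2 := ⟨k - 2, by omega⟩
  simp only [Nat.add_sub_cancel, show n + 2 - 1 = n + 1 by omega, show k + 2 - 1 = k + 1 by omega]
  rw [← Nat.add_one_mul_choose_eq, mul_assoc, ← Nat.add_one_mul_choose_eq]
  ring

theorem padicValNat_two_pred_le_choose {n k : ℕ} (hk : 2 ≤ k) (hkn : k ≤ n) :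
    padicValNat 2 (n - 1) ≤ padicValNat 2 (n.choose k) + (k - 1) := by
  have hv := congrArg (padicValNat 2) (Nat.choose_mul_mul_pred hk hkn)
  have hC : n.choose k ≠ 0 := (Nat.choose_pos hkn).ne'
  have hC' : (n - 2).choose (k - 2) ≠ 0 := (Nat.choose_pos (by omega)).ne'
  rw [padicValNat.mul (Nat.mul_ne_zero hC (by omega)) (by omega), padicValNat.mul hC (by omega),
    padicValNat.mul (Nat.mul_ne_zero (by omega) (by omega)) hC',
    padicValNat.mul (by omega) (by omega)] at hv
  have := padicValNat_two_add_padicValNat_two_succ_le (k - 1)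
  rw [show k - 1 + 1 = k by omega] at this
  omega

namespace GaussianInt

theorem one_add_I_pow_four : (⟨1, 1⟩ : ℤ[i]) ^ 4 = -4 := by decide

theorem im_one_add_I_pow_four_mul_add (N r : ℕ) :
    ((⟨1, 1⟩ : ℤ[i]) ^ (4 * N + r)).im = (-4) ^ N * ((⟨1, 1⟩ : ℤ[i]) ^ r).im := by
  rw [pow_add, pow_mul, one_add_I_pow_four, ← Zsqrtd.im_smul]
  push_cast; rfl

theorem two_pow_half_dvd_im_one_add_I_pow (j : ℕ) : 2 ^ (j / 2) ∣ ((⟨1, 1⟩ : ℤ[i]) ^ j).im := by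
  obtain ⟨N, r, hr, rfl⟩ : ∃ N r, r < 4 ∧ j = 4 * N + r :=
    ⟨j / 4, j % 4, j.mod_lt (by norm_num), (j.div_add_mod 4).symm⟩
  rw [im_one_add_I_pow_four_mul_add, show (4 * N + r) / 2 = 2 * N + r / 2 by omega, pow_add,
    Int.neg_four_pow]
  refine mul_dvd_mul (Dvd.intro_left _ rfl) ?_
  interval_cases r <;> decide

theorem im_intCast_add_pow (t : ℤ) (ξ : ℤ[i]) (n : ℕ) :
    (((t : ℤ[i]) + ξ) ^ n).im = ∑ k ∈ range (n + 1), t ^ k * n.choose k * (ξ ^ (n - k)).im := by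
  rw [add_pow, ← AddMonoidHom.mk'_apply Zsqrtd.im (fun _ _ => rfl), map_sum]
  refine sum_congr rfl fun k _ => ?_
  rw [AddMonoidHom.mk'_apply, ← Zsqrtd.im_smul]
  push_cast; ring_nf

def binomImTerm (t : ℤ) (n k : ℕ) : ℤ := t ^ k * n.choose k * ((⟨1, 1⟩ : ℤ[i]) ^ (n - k)).im

theorem two_pow_dvd_binomImTerm {t : ℤ} {v : ℕ} (ht : 2 ^ v ∣ t) (n k : ℕ) :
    2 ^ (k * v + padicValNat 2 (n.choose k) + (n - k) / 2) ∣ binomImTerm t n k := by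
  rw [pow_add, pow_add]
  refine mul_dvd_mul (mul_dvd_mul ?_ ?_) (two_pow_half_dvd_im_one_add_I_pow _)
  · rw [pow_mul']; exact pow_dvd_pow_of_dvd ht k
  · exact_mod_cast pow_padicValNat_dvd

section

variable {t₀ : ℤ} {v : ℕ}

theorem exists_sum_binomImTerm_eq_of_four_mul_add_three (ht₀ : Odd t₀) (hv : 2 ≤ v) (N : ℕ) :
    ∃ e u, 2 * N + 3 ≤ e ∧ Odd u ∧
      ∑ k ∈ range (4 * N + 3), binomImTerm (2 ^ v * t₀) (4 * N + 3) (k + 1) = 2 ^ e * u := by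
  have hrest : 2 ^ (v + 2 * N + 1 + 1) ∣
      ∑ k ∈ range (4 * N + 2), binomImTerm (2 ^ v * t₀) (4 * N + 3) (k + 2) := by
    refine dvd_sum fun k hk => (pow_dvd_pow 2 ?_).trans
      (two_pow_dvd_binomImTerm (Dvd.intro _ rfl) _ _)
    have : v + 2 * (k + 1) ≤ (k + 2) * v := by nlinarith
    omega
  have hlinear : binomImTerm (2 ^ v * t₀) (4 * N + 3) 1 =
      2 ^ (v + 2 * N + 1) * (t₀ * (4 * N + 3) * (-1) ^ N) := by
    rw [binomImTerm, show 4 * N + 3 - 1 = 4 * N + 2 by omega, im_one_add_I_pow_four_mul_add,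
      Int.neg_four_pow, show ((⟨1, 1⟩ : ℤ[i]) ^ 2).im = 2 by decide, Nat.choose_one_right]
    push_cast
    ring
  have hodd : Odd (t₀ * (4 * N + 3) * (-1) ^ N) :=
    (ht₀.mul ⟨2 * N + 1, by ring⟩).mul (odd_neg_one.pow)
  obtain ⟨u, hu, hsum⟩ := Int.exists_add_two_pow_mul_odd hrest hodd
  exact ⟨v + 2 * N + 1, u, by omega, hu, by rw [sum_range_succ', hlinear, hsum]⟩

theorem exists_sum_binomImTerm_eq_of_four_mul_add_one (ht₀ : Odd t₀) (hv : 2 ≤ v) {N : ℕ}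
    (hN : 1 ≤ N) :
    ∃ e u, 2 * N + 2 ≤ e ∧ Odd u ∧
      ∑ k ∈ range (4 * N + 1), binomImTerm (2 ^ v * t₀) (4 * N + 1) (k + 1) = 2 ^ e * u := by
  obtain ⟨w, N₀, hN₀, hNw⟩ := Nat.exists_eq_two_pow_mul_odd (n := N) (by omega)
  have hv4N : padicValNat 2 (4 * N + 1 - 1) = w + 2 := by
    rw [show 4 * N + 1 - 1 = 2 ^ (w + 2) * N₀ by rw [Nat.add_sub_cancel, hNw]; ring,
      padicValNat.mul (by positivity) (by rintro rfl; simp at hN₀), padicValNat.prime_pow,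
      padicValNat.eq_zero_of_not_dvd (by rwa [← even_iff_two_dvd, Nat.not_even_iff_odd])]
  have hrest : 2 ^ (2 * v + w + 2 * N + 1) ∣
      ∑ k ∈ range (4 * N - 1), binomImTerm (2 ^ v * t₀) (4 * N + 1) (k + 3) := by
    refine dvd_sum fun k hk => (pow_dvd_pow 2 ?_).trans
      (two_pow_dvd_binomImTerm (Dvd.intro _ rfl) _ _)
    have hC := padicValNat_two_pred_le_choose (n := 4 * N + 1) (k := k + 3) (by omega)
      (by have := mem_range.mp hk; omega)
    have : 2 * v + 2 * (k + 1) ≤ (k + 3) * v := by nlinarith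
    omega
  have hquadratic : binomImTerm (2 ^ v * t₀) (4 * N + 1) 2 =
      2 ^ (2 * v + w + 2 * N) * (t₀ ^ 2 * (4 * N + 1) * N₀ * (-1) ^ (N - 1)) := by
    have hC : (4 * N + 1).choose 2 = (4 * N + 1) * (2 ^ (w + 1) * N₀) := by
      rw [Nat.choose_two_right,
        show 4 * N + 1 - 1 = 2 * (2 ^ (w + 1) * N₀) by rw [Nat.add_sub_cancel, hNw]; ring,
        ← mul_assoc, mul_comm _ 2, mul_assoc, Nat.mul_div_cancel_left _ two_pos]
    rw [binomImTerm, hC, show 4 * N + 1 - 2 = 4 * (N - 1) + 3 by omega,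
      im_one_add_I_pow_four_mul_add, Int.neg_four_pow]
    simp only [show ((⟨1, 1⟩ : ℤ[i]) ^ 3).im = 2 by decide]
    obtain ⟨N', rfl⟩ : ∃ N', N = N' + 1 := ⟨N - 1, by omega⟩
    push_cast
    ring
  have hlinear : binomImTerm (2 ^ v * t₀) (4 * N + 1) 1 = 0 := by
    rw [binomImTerm, show 4 * N + 1 - 1 = 4 * N + 0 by omega, im_one_add_I_pow_four_mul_add]
    simp
  have hodd : Odd (t₀ ^ 2 * (4 * N + 1) * N₀ * (-1) ^ (N - 1)) :=
    (((ht₀.pow).mul ⟨2 * N, by ring⟩).mul (by exact_mod_cast hN₀)).mul (odd_neg_one.pow)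
  obtain ⟨u, hu, hsum⟩ := Int.exists_add_two_pow_mul_odd hrest hodd
  refine ⟨2 * v + w + 2 * N, u, by omega, hu, ?_⟩
  rw [show range (4 * N + 1) = range (4 * N - 1 + 1 + 1) by congr 1; omega, sum_range_succ',
    sum_range_succ', hlinear, add_zero, ← hsum, ← hquadratic]

theorem exists_sum_binomImTerm_eq (ht₀ : Odd t₀) (hv : 2 ≤ v) {M : ℕ} (hM : 1 ≤ M) :
    ∃ e u, M + 2 ≤ e ∧ Odd u ∧
      ∑ k ∈ range (2 * M + 1), binomImTerm (2 ^ v * t₀) (2 * M + 1) (k + 1) = 2 ^ e * u := by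
  obtain ⟨N, rfl | rfl⟩ := Nat.even_or_odd' M
  · rw [show 2 * (2 * N) + 1 = 4 * N + 1 by ring]
    exact exists_sum_binomImTerm_eq_of_four_mul_add_one ht₀ hv (by omega)
  · rw [show 2 * (2 * N + 1) + 1 = 4 * N + 3 by ring]
    obtain ⟨e, u, he, hu, h⟩ := exists_sum_binomImTerm_eq_of_four_mul_add_three ht₀ hv N
    exact ⟨e, u, by omega, hu, h⟩

end

theorem abs_im_one_add_I_pow_two_mul_add_one (M : ℕ) :
    |((⟨1, 1⟩ : ℤ[i]) ^ (2 * M + 1)).im| = 2 ^ M := by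
  obtain ⟨N, rfl | rfl⟩ := Nat.even_or_odd' M
  · rw [show 2 * (2 * N) + 1 = 4 * N + 1 by ring, im_one_add_I_pow_four_mul_add,
      Int.neg_four_pow]
    simp [abs_mul]
  · rw [show 2 * (2 * N + 1) + 1 = 4 * N + 3 by ring, im_one_add_I_pow_four_mul_add,
      Int.neg_four_pow, show ((⟨1, 1⟩ : ℤ[i]) ^ 3).im = 2 by decide]
    simp [abs_mul, pow_succ]

theorem eq_one_of_abs_im_pow_eq_two_pow {c : ℤ} (hc : c % 4 = 1) {M : ℕ} (hM : 1 ≤ M)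
    (h : |((⟨c, 1⟩ : ℤ[i]) ^ (2 * M + 1)).im| = 2 ^ M) : c = 1 := by
  by_contra hc1
  obtain ⟨v, t₀, ht₀, ht⟩ := Int.exists_eq_two_pow_mul_odd (sub_ne_zero.mpr hc1)
  have hv : 2 ≤ v := by
    obtain ⟨r, rfl⟩ := ht₀
    by_contra! hv
    interval_cases v <;> omega
  have hexp : ((⟨c, 1⟩ : ℤ[i]) ^ (2 * M + 1)).im =
      ∑ k ∈ range (2 * M + 1), binomImTerm (2 ^ v * t₀) (2 * M + 1) (k + 1) +
        ((⟨1, 1⟩ : ℤ[i]) ^ (2 * M + 1)).im := by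
    rw [show (⟨c, 1⟩ : ℤ[i]) = ((c - 1 : ℤ) : ℤ[i]) + ⟨1, 1⟩ by ext <;> simp,
      im_intCast_add_pow, sum_range_succ', ht]
    simp [binomImTerm]
  obtain ⟨e, u, he, hu, hsum⟩ := exists_sum_binomImTerm_eq ht₀ hv hM
  rw [hsum] at hexp
  have hlow : 2 ^ (M + 2) ≤ |2 ^ e * u| := by
    rw [abs_mul, abs_pow, abs_two]
    calc (2 : ℤ) ^ (M + 2) ≤ 2 ^ e := pow_le_pow_right₀ (by norm_num) he
      _ ≤ 2 ^ e * |u| := le_mul_of_one_le_right (by positivity)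
          (Int.one_le_abs (by rintro rfl; simp at hu))
  have hup : |2 ^ e * u| ≤ 2 ^ (M + 1) := by
    rw [show 2 ^ e * u = ((⟨c, 1⟩ : ℤ[i]) ^ (2 * M + 1)).im - ((⟨1, 1⟩ : ℤ[i]) ^ (2 * M + 1)).im
      by linarith]
    refine (abs_sub _ _).trans_eq ?_
    rw [h, abs_im_one_add_I_pow_two_mul_add_one, pow_succ]
    ring
  have : (2 : ℤ) ^ (M + 1) < 2 ^ (M + 2) := pow_lt_pow_right₀ (by norm_num) (by omega)
  linarith

theorem im_star_pow (ξ : ℤ[i]) (n : ℕ) : (star ξ ^ n).im = -(ξ ^ n).im := by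
  rw [← star_pow, Zsqrtd.im_star]

theorem im_neg_star_pow (ξ : ℤ[i]) {n : ℕ} (hn : Odd n) : ((-star ξ) ^ n).im = (ξ ^ n).im := by
  rw [hn.neg_pow, Zsqrtd.im_neg, im_star_pow, neg_neg]

theorem abs_eq_one_of_odd_of_abs_im_pow_eq_two_pow {c : ℤ} (hc : Odd c) {M : ℕ} (hM : 1 ≤ M)
    (h : |((⟨c, 1⟩ : ℤ[i]) ^ (2 * M + 1)).im| = 2 ^ M) : |c| = 1 := by
  have h2 := Int.odd_iff.mp hc
  rcases (by omega : c % 4 = 1 ∨ (-c) % 4 = 1) with h4 | h4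
  · rw [eq_one_of_abs_im_pow_eq_two_pow h4 hM h, abs_one]
  · have hneg : (⟨-c, 1⟩ : ℤ[i]) = -star ⟨c, 1⟩ := by ext <;> simp
    rw [← abs_neg, eq_one_of_abs_im_pow_eq_two_pow h4 hM
      (by rwa [hneg, im_neg_star_pow _ (odd_two_mul_add_one M)]), abs_one]

theorem dvd_im_pow (p q : ℤ) (n : ℕ) : q ∣ ((⟨p, q⟩ : ℤ[i]) ^ n).im := by
  have hq : (q : ℤ[i]) ∣ (⟨p, q⟩ : ℤ[i]) ^ n - (p : ℤ[i]) ^ n :=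
    (Dvd.intro ⟨0, 1⟩ (by ext <;> simp)).trans (sub_dvd_pow_sub_pow _ _ n)
  have := ((Zsqrtd.intCast_dvd _ _).mp hq).2
  rwa [Zsqrtd.im_sub, ← Int.cast_pow, Zsqrtd.im_intCast, sub_zero] at this

theorem abs_eq_one_of_abs_im_pow_eq_two_pow {p q : ℤ} (hp : Odd p) (hq : Odd q) {M : ℕ}
    (hM : 1 ≤ M) (h : |((⟨p, q⟩ : ℤ[i]) ^ (2 * M + 1)).im| = 2 ^ M) : |p| = 1 ∧ |q| = 1 := by
  have hq1 : |q| = 1 :=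
    Int.abs_eq_one_of_odd_of_dvd_two_pow hq (h ▸ (dvd_abs _ _).mpr (dvd_im_pow p q _))
  refine ⟨abs_eq_one_of_odd_of_abs_im_pow_eq_two_pow hp hM ?_, hq1⟩
  rcases abs_eq (zero_le_one' ℤ) |>.mp hq1 with rfl | rfl
  · exact h
  · rwa [show (⟨p, -1⟩ : ℤ[i]) = star ⟨p, 1⟩ by ext <;> simp, im_star_pow, abs_neg] at h

theorem exists_pow_eq_intCast_mul_one_add_I (M : ℕ) :
    ∃ g : ℤ[i], g.norm = 2 ∧ ∃ s : ℤ, |s| = 2 ^ M ∧ g ^ (2 * M + 1) = s * ⟨1, 1⟩ := by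
  obtain ⟨N, rfl | rfl⟩ := Nat.even_or_odd' M
  · refine ⟨⟨1, 1⟩, by decide, (-4) ^ N, by simp [abs_pow, pow_mul], ?_⟩
    rw [show 2 * (2 * N) + 1 = 4 * N + 1 by ring, pow_succ, pow_mul, one_add_I_pow_four]
    push_cast; rfl
  · refine ⟨⟨1, -1⟩, by decide, -2 * (-4) ^ N, ?_, ?_⟩
    · rw [abs_mul, abs_pow, pow_succ, pow_mul, mul_comm]
      norm_num
    rw [show 2 * (2 * N + 1) + 1 = 4 * N + 3 by ring, pow_add, pow_mul,
      show (⟨1, -1⟩ : ℤ[i]) ^ 4 = -4 by decide, show (⟨1, -1⟩ : ℤ[i]) ^ 3 = -2 * ⟨1, 1⟩ by decide]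
    push_cast; ring

theorem pow_four_eq_one_of_norm_eq_one {ξ : ℤ[i]} (h : ξ.norm = 1) : ξ ^ 4 = 1 := by
  obtain ⟨a, b⟩ := ξ
  rw [Zsqrtd.norm_def] at h
  have hab : a * b = 0 := by
    have h1 : 2 * (a * b) ≤ 1 := by nlinarith [sq_nonneg (a - b)]
    have h2 : -1 ≤ 2 * (a * b) := by nlinarith [sq_nonneg (a + b)]
    omega
  ext
  · simp [pow_succ]
    linear_combination (a * a + b * b + 1) * h - 8 * a * b * hab
  · simp [pow_succ]
    linear_combination 4 * (a * a - b * b) * hab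

theorem units_pow_pow_of_odd (u : ℤ[i]ˣ) {z : ℕ} (hz : Odd z) : (u ^ z) ^ z = u := by
  obtain ⟨k, rfl⟩ := hz
  have h4 : u ^ 4 = 1 := Units.ext <| pow_four_eq_one_of_norm_eq_one <|
    (Zsqrtd.norm_eq_one_iff' (by norm_num) _).mpr u.isUnit
  rw [← pow_mul, show (2 * k + 1) * (2 * k + 1) = 4 * (k * k + k) + 1 by ring, pow_succ, pow_mul,
    h4, one_pow, one_mul]

theorem exists_pow_eq_of_norm_eq_pow {β : ℤ[i]} (hco : IsCoprime β (star β)) {Y : ℤ} {z : ℕ}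
    (hz : Odd z) (hβ : β.norm = Y ^ z) : ∃ w : ℤ[i], w ^ z = β ∧ w.norm = Y := by
  obtain ⟨d, u, hdu⟩ := exists_associated_pow_of_mul_eq_pow' hco
    (by rw [← Zsqrtd.norm_eq_mul_conj, hβ]; push_cast; rfl : β * star β = (Y : ℤ[i]) ^ z)
  have hw : (d * ↑(u ^ z)) ^ z = β := by
    rw [mul_pow, ← Units.val_pow_eq_pow_val, units_pow_pow_of_odd u hz, hdu]
  refine ⟨_, hw, hz.pow_inj.mp ?_⟩
  rw [← hβ, ← hw]
  exact (map_pow Zsqrtd.normMonoidHom _ z).symm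

theorem exists_one_add_I_mul_pow_eq {x Y : ℤ} {z : ℕ} (hz : Odd z) (h : x ^ 2 + 1 = 2 * Y ^ z) :
    ∃ w : ℤ[i], ⟨1, 1⟩ * w ^ z = ⟨x, 1⟩ ∧ w.norm = Y := by
  obtain ⟨m, rfl⟩ := (Int.odd_of_sq_add_one_eq_two_mul h).1
  have hnorm : (⟨m + 1, -m⟩ : ℤ[i]).norm = Y ^ z := by
    rw [Zsqrtd.norm_def]; linarith
  have hco : IsCoprime (⟨m + 1, -m⟩ : ℤ[i]) (star ⟨m + 1, -m⟩) :=
    isCoprime_of_mul_eq_two_mul_add_one (u := ⟨1, -1⟩) (v := ⟨1, 1⟩) (k := ⟨m ^ 2 + m, 0⟩)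
      (by ext <;> simp; ring) (by ext <;> simp <;> ring)
  obtain ⟨w, hw, hnw⟩ := exists_pow_eq_of_norm_eq_pow hco hz hnorm
  exact ⟨w, by rw [hw]; ext <;> simp; ring, hnw⟩

end GaussianInt

theorem stmt_3 : ¬ ∃ x y z : ℕ, 0 < x ∧ 1 < y ∧ Odd z ∧ 1 < z ∧
    x ^ 2 + 1 = 2 * y ^ z := by
  rintro ⟨x, y, _, -, hy, ⟨M, rfl⟩, hz, h⟩
  have hZ : (x : ℤ) ^ 2 + 1 = 2 * (y : ℤ) ^ (2 * M + 1) := by exact_mod_cast h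
  have hy_odd : Odd (y : ℤ) :=
    (Int.odd_pow.mp (Int.odd_of_sq_add_one_eq_two_mul hZ).2).resolve_right (by omega)
  obtain ⟨w, hw, hnw⟩ := GaussianInt.exists_one_add_I_mul_pow_eq (odd_two_mul_add_one M) hZ
  obtain ⟨g, hg, s, hs, hgs⟩ := GaussianInt.exists_pow_eq_intCast_mul_one_add_I M
  set u := g * w
  have him : (u ^ (2 * M + 1)).im = s := by
    rw [mul_pow, hgs, mul_assoc, hw, Zsqrtd.im_smul]; simp
  have hnorm : u.re ^ 2 + u.im ^ 2 = 2 * y := by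
    rw [← hnw, ← hg, ← Zsqrtd.norm_mul, Zsqrtd.norm_def]; ring
  obtain ⟨hp, hq⟩ := Int.odd_and_odd_of_sq_add_sq_eq hy_odd hnorm
  obtain ⟨hp1, hq1⟩ :=
    GaussianInt.abs_eq_one_of_abs_im_pow_eq_two_pow hp hq (by omega) (him ▸ hs)
  rw [← sq_abs u.re, ← sq_abs u.im, hp1, hq1] at hnorm
  omega
end

section
/- The positive integer solutions (x, z) of the equation x² + 1 = 2·13^z are exactly (5, 1) and (239, 4). -/
private def P2 : ℕ → ℕ × ℕ
  | 0 => (1, 0)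
  | n+1 => ((P2 n).1 + 2 * (P2 n).2, (P2 n).1 + (P2 n).2)

private def A (n : ℕ) : ℕ := (P2 n).1
private def B (n : ℕ) : ℕ := (P2 n).2

private lemma A_zero : A 0 = 1 := rfl
private lemma B_zero : B 0 = 0 := rfl
private lemma A_succ (n : ℕ) : A (n+1) = A n + 2 * B n := rfl
private lemma B_succ (n : ℕ) : B (n+1) = A n + B n := rfl

private lemma addAB (a b : ℕ) : A (a + b) = A a * A b + 2 * B a * B b ∧
    B (a + b) = A a * B b + B a * A b := by
  induction b with
  | zero => simp [A_zero, B_zero]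
  | succ b ih =>
    have h1 : a + (b+1) = (a+b) + 1 := rfl
    rw [h1]
    simp only [A_succ, B_succ, ih.1, ih.2]
    constructor <;> ring

private lemma addA (a b : ℕ) : A (a + b) = A a * A b + 2 * B a * B b := (addAB a b).1
private lemma addB (a b : ℕ) : B (a + b) = A a * B b + B a * A b := (addAB a b).2

private lemma A_pos (n : ℕ) : 1 ≤ A n := by
  induction n with
  | zero => simp [A_zero]
  | succ n ih => rw [A_succ]; omega

private lemma B_strictMono : StrictMono B := by
  apply strictMono_nat_of_lt_succ
  intro n
  have := A_pos n
  rw [B_succ]; omega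

private lemma A_mono : Monotone A := by
  apply monotone_nat_of_le_succ
  intro n
  rw [A_succ]; omega

private def P26 : ℕ → ℕ × ℕ
  | 0 => (1, 0)
  | n+1 => (5 * (P26 n).1 + 26 * (P26 n).2, (P26 n).1 + 5 * (P26 n).2)

private def C (n : ℕ) : ℕ := (P26 n).1
private def D (n : ℕ) : ℕ := (P26 n).2

private lemma C_zero : C 0 = 1 := rfl
private lemma D_zero : D 0 = 0 := rfl
private lemma C_succ (n : ℕ) : C (n+1) = 5 * C n + 26 * D n := rfl
private lemma D_succ (n : ℕ) : D (n+1) = C n + 5 * D n := rfl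

private lemma addCD (a b : ℕ) : C (a + b) = C a * C b + 26 * D a * D b ∧
    D (a + b) = C a * D b + D a * C b := by
  induction b with
  | zero => simp [C_zero, D_zero]
  | succ b ih =>
    have h1 : a + (b+1) = (a+b) + 1 := rfl
    rw [h1]
    simp only [C_succ, D_succ, ih.1, ih.2]
    constructor <;> ring

private lemma addC (a b : ℕ) : C (a + b) = C a * C b + 26 * D a * D b := (addCD a b).1
private lemma addD (a b : ℕ) : D (a + b) = C a * D b + D a * C b := (addCD a b).2

private lemma C_pos (n : ℕ) : 1 ≤ C n := by
  induction n with
  | zero => simp [C_zero]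
  | succ n ih => rw [C_succ]; omega

private lemma D_strictMono : StrictMono D := by
  apply strictMono_nat_of_lt_succ
  intro n
  have := C_pos n
  rw [D_succ]; omega

private lemma C_mono : Monotone C := by
  apply monotone_nat_of_le_succ
  intro n
  have := D_succ n
  rw [C_succ]; omega

-- Pell identities
private lemma pell2 (n : ℕ) : A n ^ 2 = 2 * B n ^ 2 + 1 ∨ A n ^ 2 + 1 = 2 * B n ^ 2 := by
  induction n with
  | zero => left; simp [A_zero, B_zero]
  | succ n ih =>
    rw [A_succ, B_succ]
    rcases ih with h | h
    · right; nlinarith [h]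
    · left; nlinarith [h]

private lemma pell26 (n : ℕ) : C n ^ 2 = 26 * D n ^ 2 + 1 ∨ C n ^ 2 + 1 = 26 * D n ^ 2 := by
  induction n with
  | zero => left; simp [C_zero, D_zero]
  | succ n ih =>
    rw [C_succ, D_succ]
    rcases ih with h | h
    · right; nlinarith [h]
    · left; nlinarith [h]

private lemma B7_val : B 7 = 169 := by decide
private lemma A7_val : A 7 = 239 := by decide
private lemma A4_val : A 4 = 17 := by decide
private lemma C2_val : C 2 = 51 := by decide
private lemma C1_val : C 1 = 5 := by decide
private lemma D1_val : D 1 = 1 := by decide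
private lemma B1_val : B 1 = 1 := by decide
private lemma A1_val : A 1 = 1 := by decide

private lemma not13A (n : ℕ) : ¬ (13 ∣ A n) := by
  intro h
  have hA : (A n : ZMod 13) = 0 := (ZMod.natCast_eq_zero_iff _ _).2 h
  have key : ∀ b : ZMod 13, (0:ZMod 13)^2 ≠ 2*b^2 + 1 ∧ (0:ZMod 13)^2 + 1 ≠ 2*b^2 := by decide
  rcases pell2 n with h2 | h2 <;>
  · have := congrArg (Nat.cast : ℕ → ZMod 13) h2
    push_cast at this
    rw [hA] at this
    first
      | exact (key (B n : ZMod 13)).1 this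
      | exact (key (B n : ZMod 13)).2 this

private lemma not13C (n : ℕ) : ¬ (13 ∣ C n) := by
  intro h
  have hC : (C n : ZMod 13) = 0 := (ZMod.natCast_eq_zero_iff _ _).2 h
  have key : ∀ b : ZMod 13, (0:ZMod 13)^2 ≠ 26*b^2 + 1 ∧ (0:ZMod 13)^2 + 1 ≠ 26*b^2 := by decide
  rcases pell26 n with h2 | h2 <;>
  · have := congrArg (Nat.cast : ℕ → ZMod 13) h2
    push_cast at this
    rw [hC] at this
    first
      | exact (key (D n : ZMod 13)).1 this
      | exact (key (D n : ZMod 13)).2 this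

private lemma Bmod13 (q r : ℕ) : (B (7*q + r) : ZMod 13) = 5^q * (B r : ZMod 13) := by
  induction q with
  | zero => simp
  | succ q ih =>
    have h1 : 7*(q+1) + r = 7 + (7*q + r) := by ring
    rw [h1, addB, B7_val, A7_val]
    push_cast
    rw [ih]
    have h239 : (239 : ZMod 13) = 5 := by decide
    have h169 : (169 : ZMod 13) = 0 := by decide
    rw [h239, h169]
    ring

private instance : Fact (Nat.Prime 13) := ⟨by norm_num⟩

private lemma dvd13B (n : ℕ) (h : 13 ∣ B n) : 7 ∣ n := by
  have hd : n = 7 * (n / 7) + n % 7 := (Nat.div_add_mod n 7).symm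
  have hB : (B n : ZMod 13) = 0 := (ZMod.natCast_eq_zero_iff _ _).2 h
  rw [hd, Bmod13] at hB
  have h50 : (5 : ZMod 13) ≠ 0 := by decide
  have h5 : (5 : ZMod 13) ^ (n/7) ≠ 0 := pow_ne_zero _ h50
  have hr : (B (n % 7) : ZMod 13) = 0 := by
    rcases mul_eq_zero.1 hB with h' | h'
    · exact absurd h' h5
    · exact h'
  have hr' : 13 ∣ B (n % 7) := (ZMod.natCast_eq_zero_iff _ _).1 hr
  have hlt : n % 7 < 7 := Nat.mod_lt _ (by norm_num)
  interval_cases h : (n % 7)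
  · omega
  all_goals exact absurd hr' (by decide)

private lemma CDmod (n : ℕ) : (C n : ZMod 13) = 5^n ∧
    5 * (D n : ZMod 13) = n * 5^n := by
  induction n with
  | zero => simp [C_zero, D_zero]
  | succ n ih =>
    rw [C_succ, D_succ]
    push_cast
    rw [ih.1]
    constructor
    · have h26 : (26 : ZMod 13) = 0 := by decide
      rw [h26]; ring
    · have : 5 * (5 * (D n : ZMod 13)) = 5 * ((n : ZMod 13) * 5^n) := by rw [ih.2]
      calc 5 * ((5:ZMod 13)^n + 5 * (D n : ZMod 13))
          = 5 * (5:ZMod 13)^n + 5 * (5 * (D n : ZMod 13)) := by ring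
        _ = 5 * (5:ZMod 13)^n + 5 * ((n : ZMod 13) * 5^n) := by rw [this]
        _ = ((n:ZMod 13) + 1) * 5^(n+1) := by ring

private lemma dvd13D (n : ℕ) (h : 13 ∣ D n) : 13 ∣ n := by
  have hD : (D n : ZMod 13) = 0 := (ZMod.natCast_eq_zero_iff _ _).2 h
  have h2 := (CDmod n).2
  rw [hD, mul_zero] at h2
  have h5 : (5 : ZMod 13) ^ n ≠ 0 := pow_ne_zero _ (by decide)
  have hn : (n : ZMod 13) = 0 := by
    rcases mul_eq_zero.1 h2.symm with h' | h'
    · exact h'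
    · exact absurd h' h5
  exact (ZMod.natCast_eq_zero_iff _ _).1 hn

private lemma poly13B (m : ℕ) : B (13*m) = 13 * A m^12 * B m + B m^3 *
    (572*A m^10 + 5148*A m^8*B m^2 + 13728*A m^6*B m^4 + 11440*A m^4*B m^6 +
     2496*A m^2*B m^8 + 64*B m^10) := by
  have h : 13*m = m+(m+(m+(m+(m+(m+(m+(m+(m+(m+(m+(m+m))))))))))) := by ring
  rw [h]
  simp only [addA, addB]
  ring

private lemma poly13D (m : ℕ) : D (13*m) = 13 * C m^12 * D m + 169 * D m^3 *
    (44*C m^10 + 5148*C m^8*D m^2 + 178464*C m^6*D m^4 + 1933360*C m^4*D m^6 +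
     5483712*C m^2*D m^8 + 1827904*D m^10) := by
  have h : 13*m = m+(m+(m+(m+(m+(m+(m+(m+(m+(m+(m+(m+m))))))))))) := by ring
  rw [h]
  simp only [addC, addD]
  ring

private lemma bpow7 (t : ℕ) : ∃ k k' : ℕ,
    A (7*(t+1)) = 239^(t+1) + 169 * k ∧
    B (7*(t+1)) = (t+1) * 239^t * 169 + 169^2 * k' := by
  induction t with
  | zero =>
    exact ⟨0, 0, by simp [A7_val], by simp [B7_val]⟩
  | succ t ih =>
    obtain ⟨k, k', hA, hB⟩ := ih
    have h1 : 7*(t+2) = 7*(t+1) + 7 := by ring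
    refine ⟨239*k + 338*((t+1)*239^t) + 338*169*k', k + 239*k', ?_, ?_⟩
    · rw [h1, addA, hA, hB, A7_val, B7_val]; ring
    · rw [h1, addB, hA, hB, A7_val, B7_val]; ring

private lemma B13_gt (m : ℕ) (hm : 1 ≤ m) : 13 * B m < B (13*m) := by
  have h1 : 13*m = 12*m + m := by ring
  rw [h1, addB]
  have h2 : 17 ≤ A (12*m) := by
    calc 17 = A 4 := A4_val.symm
    _ ≤ A (12*m) := A_mono (by omega)
  have h3 : 1 ≤ B m := by
    calc 1 = B 1 := B1_val.symm
    _ ≤ B m := B_strictMono.monotone hm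
  have h4 := A_pos m
  nlinarith [B_strictMono.monotone (show 0 ≤ 12*m by omega)]

private lemma D13_gt (m : ℕ) (hm : 1 ≤ m) : 13 * D m < D (13*m) := by
  have h1 : 13*m = 12*m + m := by ring
  rw [h1, addD]
  have h2 : 51 ≤ C (12*m) := by
    calc 51 = C 2 := C2_val.symm
    _ ≤ C (12*m) := C_mono (by omega)
  have h3 : 1 ≤ D m := by
    calc 1 = D 1 := D1_val.symm
    _ ≤ D m := D_strictMono.monotone hm
  have h4 := C_pos m
  nlinarith [D_strictMono.monotone (show 0 ≤ 12*m by omega)]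

private lemma Bpow (n w : ℕ) (hn : 1 ≤ n) (h : B n = 13^w) : n = 1 ∨ n = 7 := by
  rcases Nat.eq_zero_or_pos w with hw | hw
  · subst hw
    left
    exact B_strictMono.injective (h.trans B1_val.symm)
  · have h13 : 13 ∣ B n := by rw [h]; exact dvd_pow_self 13 (by omega)
    have h7 : 7 ∣ n := dvd13B n h13
    by_cases hdn : 13 ∣ n
    · obtain ⟨m, rfl⟩ := hdn
      have hm : 1 ≤ m := by omega
      have h7m : 7 ∣ m := (Nat.Coprime.dvd_of_dvd_mul_left (by decide) h7)
      obtain ⟨s, rfl⟩ := h7m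
      have hs : 1 ≤ s := by omega
      obtain ⟨k, k', hA7, hB7⟩ := bpow7 (s-1)
      rw [show s-1+1 = s from by omega] at hA7 hB7
      obtain ⟨b', hb'⟩ : ∃ b', B (7*s) = 169*b' :=
        ⟨s*239^(s-1) + 169*k', by rw [hB7]; ring⟩
      set Q := 572*A (7*s)^10 + 5148*A (7*s)^8*B (7*s)^2 + 13728*A (7*s)^6*B (7*s)^4 +
        11440*A (7*s)^4*B (7*s)^6 + 2496*A (7*s)^2*B (7*s)^8 + 64*B (7*s)^10 with hQ
      have hBn : B (13*(7*s)) = 13 * B (7*s) * (A (7*s)^12 + 13 * (169 * (b'^2 * Q))) := by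
        rw [poly13B, ← hQ, hb']
        ring
      set E := A (7*s)^12 + 13 * (169 * (b'^2 * Q)) with hE
      have hE13 : ¬ 13 ∣ E := by
        intro hEd
        have h12 : 13 ∣ A (7*s)^12 := by
          have : E = A (7*s)^12 + 13 * (169 * (b'^2 * Q)) := hE
          omega
        exact not13A (7*s) (Nat.Prime.dvd_of_dvd_pow (by norm_num) h12)
      have hEd : E ∣ 13^w := ⟨13*B (7*s), by rw [← h, hBn]; ring⟩
      obtain ⟨j, hj, hEj⟩ := (Nat.dvd_prime_pow (by norm_num : Nat.Prime 13)).1 hEd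
      have hj0 : j = 0 := by
        by_contra hj0
        exact hE13 (hEj ▸ dvd_pow_self 13 hj0)
      rw [hj0, pow_zero] at hEj
      rw [hEj, mul_one] at hBn
      have := B13_gt (7*s) (by omega)
      omega
    · obtain ⟨s, rfl⟩ := h7
      have hs : 1 ≤ s := by omega
      obtain ⟨k, k', hA7, hB7⟩ := bpow7 (s-1)
      rw [show s-1+1 = s from by omega] at hA7 hB7
      have hwge : 2 ≤ w := by
        have h169d : 13^2 ∣ 13^w := by
          rw [← h, hB7]
          exact ⟨s*239^(s-1) + 169*k', by ring⟩
        exact (Nat.pow_dvd_pow_iff_le_right (by norm_num)).1 h169d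
      have h3 : ¬ (13^3 ∣ B (7*s)) := by
        intro hd
        rw [hB7] at hd
        have h13s : 13 ∣ s*239^(s-1) := by
          generalize s*239^(s-1) = X at hd ⊢
          omega
        rcases (Nat.Prime.dvd_mul (by norm_num)).1 h13s with h' | h'
        · exact hdn (Dvd.dvd.mul_left h' 7)
        · have := Nat.Prime.dvd_of_dvd_pow (p := 13) (by norm_num) h'
          norm_num at this
      have hw2 : w = 2 := by
        by_contra hw2
        have : 3 ≤ w := by omega
        exact h3 (by rw [h]; exact pow_dvd_pow 13 this)
      rw [hw2] at h
      right
      have h7' : B (7*s) = B 7 := by rw [h, B7_val]; norm_num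
      have := B_strictMono.injective h7'
      omega

private lemma Dpow (n u : ℕ) (hn : 1 ≤ n) (h : D n = 13^u) : n = 1 := by
  by_cases h13 : 13 ∣ D n
  · obtain ⟨m, rfl⟩ := dvd13D n h13
    have hm : 1 ≤ m := by omega
    set Q := 44*C m^10 + 5148*C m^8*D m^2 + 178464*C m^6*D m^4 + 1933360*C m^4*D m^6 +
      5483712*C m^2*D m^8 + 1827904*D m^10 with hQ
    have hDn : D (13*m) = 13 * D m * (C m^12 + 13 * (D m^2 * Q)) := by
      rw [poly13D, ← hQ]; ring
    set E := C m^12 + 13 * (D m^2 * Q) with hE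
    have hE13 : ¬ 13 ∣ E := by
      intro hEd
      have h12 : 13 ∣ C m^12 := by
        have : E = C m^12 + 13 * (D m^2 * Q) := hE
        omega
      exact not13C m (Nat.Prime.dvd_of_dvd_pow (by norm_num) h12)
    have hEd : E ∣ 13^u := ⟨13*D m, by rw [← h, hDn]; ring⟩
    obtain ⟨j, hj, hEj⟩ := (Nat.dvd_prime_pow (by norm_num : Nat.Prime 13)).1 hEd
    have hj0 : j = 0 := by
      by_contra hj0
      exact hE13 (hEj ▸ dvd_pow_self 13 hj0)
    rw [hj0, pow_zero] at hEj
    rw [hEj, mul_one] at hDn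
    have := D13_gt m hm
    omega
  · have hu : u = 0 := by
      by_contra hu
      exact h13 (by rw [h]; exact dvd_pow_self 13 hu)
    rw [hu, pow_zero] at h
    exact D_strictMono.injective (h.trans D1_val.symm)

private lemma descent2 : ∀ y x : ℕ, 1 ≤ x →
    (x^2 + 1 = 2*y^2 → ∃ m, m % 2 = 1 ∧ x = A m ∧ y = B m) ∧
    (x^2 = 2*y^2 + 1 → ∃ m, m % 2 = 0 ∧ x = A m ∧ y = B m) := by
  intro y
  induction y using Nat.strong_induction_on with
  | _ y ih =>
  intro x hx
  constructor
  · intro h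
    have hy : 1 ≤ y := by nlinarith
    have hyx : y ≤ x := by nlinarith
    have hx2y : x < 2*y := by nlinarith
    have hx1 : 1 ≤ 2*y - x := by omega
    have hy1 : x - y < y := by omega
    have h' : (x:ℤ)^2 + 1 = 2*(y:ℤ)^2 := by exact_mod_cast h
    have heq : (2*y - x)^2 = 2*(x - y)^2 + 1 := by
      zify [hyx, le_of_lt hx2y]
      nlinarith [h']
    obtain ⟨m, hm, hxm, hym⟩ := ((ih (x - y) hy1) (2*y - x) hx1).2 heq
    refine ⟨m + 1, by omega, ?_, ?_⟩
    · rw [A_succ, ← hxm, ← hym]; omega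
    · rw [B_succ, ← hxm, ← hym]; omega
  · intro h
    rcases Nat.eq_zero_or_pos y with hy0 | hy
    · subst hy0
      have : x = 1 := by nlinarith
      exact ⟨0, rfl, by rw [this, A_zero], by rw [B_zero]⟩
    · have hyx : y < x := by nlinarith
      have hx2y : x < 2*y := by nlinarith
      have hx1 : 1 ≤ 2*y - x := by omega
      have hy1 : x - y < y := by omega
      have h' : (x:ℤ)^2 = 2*(y:ℤ)^2 + 1 := by exact_mod_cast h
      have heq : (2*y - x)^2 + 1 = 2*(x - y)^2 := by
        zify [le_of_lt hyx, le_of_lt hx2y]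
        nlinarith [h']
      obtain ⟨m, hm, hxm, hym⟩ := ((ih (x - y) hy1) (2*y - x) hx1).1 heq
      refine ⟨m + 1, by omega, ?_, ?_⟩
      · rw [A_succ, ← hxm, ← hym]; omega
      · rw [B_succ, ← hxm, ← hym]; omega

private lemma descent26 : ∀ y x : ℕ, 1 ≤ x →
    (x^2 + 1 = 26*y^2 → ∃ m, m % 2 = 1 ∧ x = C m ∧ y = D m) ∧
    (x^2 = 26*y^2 + 1 → ∃ m, m % 2 = 0 ∧ x = C m ∧ y = D m) := by
  intro y
  induction y using Nat.strong_induction_on with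
  | _ y ih =>
  intro x hx
  constructor
  · intro h
    have hy : 1 ≤ y := by nlinarith
    have hyx : 5*y ≤ x := by nlinarith
    have hx2y : 5*x < 26*y := by nlinarith
    have hx1 : 1 ≤ 26*y - 5*x := by omega
    have hx6 : x < 6*y := by nlinarith
    have hy1 : x - 5*y < y := by omega
    have h' : (x:ℤ)^2 + 1 = 26*(y:ℤ)^2 := by exact_mod_cast h
    have heq : (26*y - 5*x)^2 = 26*(x - 5*y)^2 + 1 := by
      zify [hyx, le_of_lt hx2y]
      nlinarith [h']
    obtain ⟨m, hm, hxm, hym⟩ := ((ih (x - 5*y) hy1) (26*y - 5*x) hx1).2 heq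
    refine ⟨m + 1, by omega, ?_, ?_⟩
    · rw [C_succ, ← hxm, ← hym]; omega
    · rw [D_succ, ← hxm, ← hym]; omega
  · intro h
    rcases Nat.eq_zero_or_pos y with hy0 | hy
    · subst hy0
      have : x = 1 := by nlinarith
      exact ⟨0, rfl, by rw [this, C_zero], by rw [D_zero]⟩
    · have hyx : 5*y < x := by nlinarith
      have hx2y : 5*x < 26*y := by nlinarith
      have hx1 : 1 ≤ 26*y - 5*x := by omega
      have hx6 : x < 6*y := by nlinarith
      have hy1 : x - 5*y < y := by omega
      have h' : (x:ℤ)^2 = 26*(y:ℤ)^2 + 1 := by exact_mod_cast h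
      have heq : (26*y - 5*x)^2 + 1 = 26*(x - 5*y)^2 := by
        zify [le_of_lt hyx, le_of_lt hx2y]
        nlinarith [h']
      obtain ⟨m, hm, hxm, hym⟩ := ((ih (x - 5*y) hy1) (26*y - 5*x) hx1).1 heq
      refine ⟨m + 1, by omega, ?_, ?_⟩
      · rw [C_succ, ← hxm, ← hym]; omega
      · rw [D_succ, ← hxm, ← hym]; omega

theorem stmt_5 (x z : ℕ) (hx : 0 < x) (hz : 0 < z) :
    x ^ 2 + 1 = 2 * 13 ^ z ↔ (x, z) = (5, 1) ∨ (x, z) = (239, 4) := by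
  constructor
  · intro h
    rcases Nat.even_or_odd z with ⟨u, hu⟩ | ⟨u, hu⟩
    · have hy : x^2 + 1 = 2*(13^u)^2 := by
        rw [h, hu, pow_add]; ring
      obtain ⟨m, hm, hxm, hym⟩ := (descent2 (13^u) x hx).1 hy
      have hm1 : 1 ≤ m := by omega
      rcases Bpow m u hm1 hym.symm with h1 | h7
      · exfalso
        rw [h1, B1_val] at hym
        have hu0 : u = 0 := by
          by_contra hu'
          have := Nat.one_lt_pow hu' (show 1 < 13 by norm_num)
          omega
        omega
      · right
        rw [h7, B7_val] at hym
        have hu2 : u = 2 := by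
          have h2 : (13:ℕ)^u = 13^2 := by rw [hym]; norm_num
          exact Nat.pow_right_injective (by norm_num) h2
        rw [h7, A7_val] at hxm
        simp only [Prod.mk.injEq]
        omega
    · have hy : x^2 + 1 = 26*(13^u)^2 := by
        rw [h, hu, show 2*u+1 = u*2+1 from by ring, pow_succ, pow_mul]; ring
      obtain ⟨m, hm, hxm, hym⟩ := (descent26 (13^u) x hx).1 hy
      have hm1 : m = 1 := Dpow m u (by omega) hym.symm
      left
      rw [hm1, C1_val] at hxm
      rw [hm1, D1_val] at hym
      have hu0 : u = 0 := by
        by_contra hu'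
        have := Nat.one_lt_pow hu' (show 1 < 13 by norm_num)
        omega
      simp only [Prod.mk.injEq]
      omega
  · rintro (h | h) <;>
    · simp only [Prod.mk.injEq] at h
      obtain ⟨h1, h2⟩ := h
      subst h1; subst h2
      norm_num
end

section
/- The equation x⁴ - 2y² = 1 has no positive integer solutions (x, y). -/
/-!
Since `x⁴ = 1 + 2y²` is odd, write `x = 2t + 1` and `u = t² + t`; then `x² - 1 = 4u` and
`y² = 4u (2u + 1)` with coprime factors, so `4u = ±d²`. The sign `+` makes `x² - d² = 1`, forcing
`d = 0`, and the sign `-` is compatible with `u = t(t + 1) ≥ 0` only for `d = 0`; either way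
`u = 0` and hence `y = 0`.
-/

theorem Int.eq_zero_of_sq_sub_sq_eq_one {a b : ℤ} (h : a ^ 2 - b ^ 2 = 1) : b = 0 := by
  have hmul : (a - b) * (a + b) = 1 := by linear_combination h
  rcases Int.eq_one_or_neg_one_of_mul_eq_one' hmul with ⟨h₁, h₂⟩ | ⟨h₁, h₂⟩ <;> omega

theorem stmt_6_general (x y : ℤ) (hy : 0 < y) :
    x ^ 4 - 2 * y ^ 2 ≠ 1 := by
  intro h
  have hodd : Odd x := by
    have : Odd (x ^ 4) := ⟨y ^ 2, by linear_combination h⟩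
    exact Int.odd_pow.mp this |>.resolve_right (by norm_num)
  obtain ⟨t, rfl⟩ := hodd
  obtain ⟨u, hu⟩ : ∃ u, u = t ^ 2 + t := ⟨_, rfl⟩
  have hsq : 4 * u * (2 * u + 1) = y ^ 2 :=
    mul_left_cancel₀ two_ne_zero (by linear_combination h + (16 * (u + t ^ 2 + t) + 8) * hu)
  have hcop : IsCoprime (4 * u) (2 * u + 1) := ⟨-(u + 1), 2 * u + 1, by ring⟩
  have hu_nonneg : 0 ≤ u := by nlinarith [sq_nonneg (2 * t + 1)]
  have hu0 : u = 0 := by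
    obtain ⟨d, hd | hd⟩ := Int.sq_of_isCoprime hcop hsq
    · have hd0 : d = 0 :=
        Int.eq_zero_of_sq_sub_sq_eq_one (a := 2 * t + 1) (by linear_combination hd - 4 * hu)
      simpa [hd0] using hd
    · linarith [sq_nonneg d]
  exact hy.ne' (by simpa [hu0] using hsq.symm)

theorem stmt_6 (x y : ℤ) (hx : 0 < x) (hy : 0 < y) :
    x ^ 4 - 2 * y ^ 2 ≠ 1 :=
  stmt_6_general x y hy
end

section
/- The only positive integer solution of the equation x⁴ - 2y² = -1 is (x, y) = (1, 1). -/
/-!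
If `x ^ 4 - 2 * y ^ 2 = -1` then `y ^ 4 - x ^ 4 = (y ^ 2 - 1) ^ 2`, so by Fermat's right triangle
theorem (`a ^ 4 - b ^ 4 = c ^ 2` forces `b * c = 0`) we get `y ^ 2 = 1`. Fermat's theorem is proved
by infinite descent on `|a|`: after dividing out `gcd a b`, the parametrisation of primitive
Pythagorean triples applied to `(b ^ 2, c, a ^ 2)` when `b` is odd, and twice, starting from
`(c, b ^ 2, a ^ 2)`, when `b` is even, yields a solution with smaller `|a|`.
-/

structure FermatRightTriangle (a b c : ℤ) : Prop where
  b_ne_zero : b ≠ 0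
  c_ne_zero : c ≠ 0
  eq : a ^ 4 - b ^ 4 = c ^ 2

theorem Int.exists_sq_of_isCoprime_of_mul_eq_sq {m n k : ℤ} (h : IsCoprime m n) (hm : 0 ≤ m)
    (heq : m * n = k ^ 2) : ∃ i, m = i ^ 2 := by
  obtain ⟨i, hi | hi⟩ := Int.sq_of_isCoprime h heq
  · exact ⟨i, hi⟩
  · exact ⟨i, by linarith [sq_nonneg i]⟩

namespace FermatRightTriangle

variable {a b c : ℤ}

theorem a_ne_zero (h : FermatRightTriangle a b c) : a ≠ 0 := by
  rintro rfl
  have hb := h.b_ne_zero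
  have : 0 < b ^ 4 := by positivity
  nlinarith [h.eq, sq_nonneg c]

theorem isCoprime_b_c (h : FermatRightTriangle a b c) (hab : IsCoprime a b) : IsCoprime b c := by
  have hc : c ^ 2 = a ^ 4 + b * -b ^ 3 := by linear_combination -h.eq
  have : IsCoprime b (c ^ 2) := hc ▸ hab.symm.pow_right.add_mul_left_right _
  exact (IsCoprime.pow_right_iff two_pos).mp this

theorem odd_a (h : FermatRightTriangle a b c) (hab : IsCoprime a b) : Odd a := by
  by_contra ha
  obtain ⟨k, rfl⟩ := Int.not_odd_iff_even.mp ha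
  have hb : Odd b := by
    refine Int.not_even_iff_odd.mp fun ⟨l, hl⟩ => ?_
    have := hab.isUnit_of_dvd' (x := 2) ⟨k, by ring⟩ ⟨l, by rw [hl]; ring⟩
    norm_num [Int.isUnit_iff] at this
  have hb4 : b ^ 4 % 4 = 1 := by
    rw [show b ^ 4 = (b ^ 2) ^ 2 by ring]
    exact Int.sq_mod_four_eq_one_of_odd hb.pow
  have hc2 : 4 ∣ c ^ 2 ∨ c ^ 2 % 4 = 1 := by
    rcases Int.even_or_odd c with ⟨l, rfl⟩ | hc
    · exact .inl ⟨l ^ 2, by ring⟩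
    · exact .inr (Int.sq_mod_four_eq_one_of_odd hc)
  have := h.eq
  have : (k + k) ^ 4 = 4 * (4 * k ^ 4) := by ring
  omega

theorem exists_smaller_of_gcd_ne_one (h : FermatRightTriangle a b c) (hab : Int.gcd a b ≠ 1) :
    ∃ a' b' c', FermatRightTriangle a' b' c' ∧ a'.natAbs < a.natAbs := by
  obtain ⟨a', b', -, ha, hb⟩ := Int.exists_gcd_one (Int.gcd_pos_of_ne_zero_right a h.b_ne_zero)
  set d : ℤ := (a.gcd b : ℤ)
  have hd : 1 < d := by have := Int.gcd_pos_of_ne_zero_right a h.b_ne_zero; omega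
  have hc : (d ^ 2) ^ 2 ∣ c ^ 2 := ⟨a' ^ 4 - b' ^ 4, by rw [← h.eq, ha, hb]; ring⟩
  obtain ⟨c', rfl⟩ := (Int.pow_dvd_pow_iff two_ne_zero).mp hc
  have hd4 : d ^ 4 ≠ 0 := by positivity
  refine ⟨a', b', c', ⟨?_, ?_, ?_⟩, ?_⟩
  · rintro rfl; exact h.b_ne_zero (by simp [hb])
  · rintro rfl; exact h.c_ne_zero (by simp)
  · have heq := h.eq
    rw [ha, hb] at heq
    exact mul_left_cancel₀ hd4 (by linear_combination heq)
  · have ha' : a' ≠ 0 := by rintro rfl; exact h.a_ne_zero (by simp [ha])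
    rw [ha, Int.natAbs_mul]
    have : 1 < d.natAbs := by omega
    have : 0 < a'.natAbs := Int.natAbs_pos.mpr ha'
    nlinarith

theorem exists_smaller_of_odd (h : FermatRightTriangle a b c) (hbc : IsCoprime b c)
    (hb : b % 2 = 1) : ∃ a' b' c', FermatRightTriangle a' b' c' ∧ a'.natAbs < a.natAbs := by
  have ht : PythagoreanTriple (b ^ 2) c (a ^ 2) := by
    unfold PythagoreanTriple; linear_combination -h.eq
  have hb2 : b ^ 2 % 2 = 1 := Int.odd_iff.mp (Int.odd_iff.mpr hb).pow
  have ha := h.a_ne_zero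
  obtain ⟨m, n, hbmn, hcmn, hamn, -⟩ :=
    ht.coprime_classification' (Int.isCoprime_iff_gcd_eq_one.mp hbc.pow_left) hb2 (by positivity)
  have hn : n ≠ 0 := by rintro rfl; exact h.c_ne_zero (by simp [hcmn])
  refine ⟨m, n, a * b, ⟨hn, mul_ne_zero ha h.b_ne_zero, ?_⟩, ?_⟩
  · linear_combination (-a ^ 2) * hbmn - (m ^ 2 - n ^ 2) * hamn
  · rw [Int.natAbs_lt_iff_sq_lt]
    have : 0 < n ^ 2 := by positivity
    linarith

theorem exists_smaller_of_sq_add_sq {M N k : ℤ} (hM : 0 < M) (hN : 0 < N) (hMo : M % 2 = 1)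
    (hMN : Int.gcd M N = 1) (ha : M ^ 2 + N ^ 2 = a ^ 2) (hk : M * N = 2 * k ^ 2) :
    ∃ a' b' c', FermatRightTriangle a' b' c' ∧ a'.natAbs < a.natAbs := by
  -- `M = i ^ 2` and `N = 2 * j ^ 2`; the primitive triple `(M, N, |a|)` then has parameters
  -- `r = u ^ 2`, `s = v ^ 2`, and `M = r ^ 2 - s ^ 2` reads `u ^ 4 - v ^ 4 = i ^ 2`.
  obtain ⟨N', rfl⟩ : 2 ∣ N := by
    rcases Int.even_mul.mp (⟨k ^ 2, by linarith⟩ : Even (M * N)) with hMe | hNe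
    · exact absurd (Int.odd_iff.mpr hMo) (Int.not_odd_iff_even.mpr hMe)
    · exact even_iff_two_dvd.mp hNe
  have hN' : 0 < N' := by linarith
  have hMN' : IsCoprime M N' :=
    (Int.isCoprime_iff_gcd_eq_one.mpr hMN).of_isCoprime_of_dvd_right (dvd_mul_left N' 2)
  have hk' : M * N' = k ^ 2 := by linarith
  obtain ⟨i, rfl⟩ := Int.exists_sq_of_isCoprime_of_mul_eq_sq hMN' hM.le hk'
  obtain ⟨j, rfl⟩ := Int.exists_sq_of_isCoprime_of_mul_eq_sq hMN'.symm hN'.le (by linarith)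
  have ha0 : 0 < |a| := by
    refine abs_pos.mpr fun ha0 => ?_
    nlinarith [ha0 ▸ ha]
  have ht : PythagoreanTriple (i ^ 2) (2 * j ^ 2) |a| := by
    unfold PythagoreanTriple; rw [abs_mul_abs_self]; linear_combination ha
  obtain ⟨r, s, hi, hj, hars, hrs, -, hr⟩ := ht.coprime_classification' hMN hMo ha0
  have hr : 0 < r := lt_of_le_of_ne hr fun hr0 => by nlinarith [hr0 ▸ hj]
  have hs : 0 < s := by nlinarith
  have hrs : IsCoprime r s := Int.isCoprime_iff_gcd_eq_one.mpr hrs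
  obtain ⟨u, rfl⟩ := Int.exists_sq_of_isCoprime_of_mul_eq_sq (k := j) hrs hr.le (by linarith)
  obtain ⟨v, rfl⟩ :=
    Int.exists_sq_of_isCoprime_of_mul_eq_sq (k := j) hrs.symm hs.le (by linarith)
  refine ⟨u, v, i, ⟨?_, ?_, ?_⟩, ?_⟩
  · rintro rfl; simp at hs
  · rintro rfl; simp at hM
  · linear_combination -hi
  · rw [Int.natAbs_lt_iff_sq_lt, ← sq_abs a]
    nlinarith

theorem exists_smaller_of_even (h : FermatRightTriangle a b c) (hab : IsCoprime a b)
    (hb : b % 2 = 0) : ∃ a' b' c', FermatRightTriangle a' b' c' ∧ a'.natAbs < a.natAbs := by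
  have hc : c % 2 = 1 := by
    have hb4 : Even (b ^ 4) := (Int.even_iff.mpr hb).pow_of_ne_zero four_ne_zero
    have : Odd (c ^ 2) := h.eq ▸ (h.odd_a hab).pow.sub_even hb4
    exact Int.odd_iff.mp ((Int.odd_pow' two_ne_zero).mp this)
  have ht : PythagoreanTriple c (b ^ 2) (a ^ 2) := by
    unfold PythagoreanTriple; linear_combination -h.eq
  have hgcd : Int.gcd c (b ^ 2) = 1 :=
    Int.isCoprime_iff_gcd_eq_one.mp (h.isCoprime_b_c hab).symm.pow_right
  obtain ⟨m, n, -, hbmn, hamn, hmn, hpar, hm⟩ :=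
    ht.coprime_classification' hgcd hc (by have := h.a_ne_zero; positivity)
  obtain ⟨k, rfl⟩ := Int.dvd_of_emod_eq_zero hb
  have hk : m * n = 2 * k ^ 2 := by linarith
  have hk0 : 0 < k ^ 2 := by have := right_ne_zero_of_mul h.b_ne_zero; positivity
  have hm : 0 < m := lt_of_le_of_ne hm fun hm0 => by nlinarith [hm0 ▸ hk]
  have hn : 0 < n := by nlinarith
  rcases hpar with ⟨-, hno⟩ | ⟨hmo, -⟩
  · exact exists_smaller_of_sq_add_sq hn hm hno (by rwa [Int.gcd_comm])
      (k := k) (by linear_combination -hamn) (by linear_combination hk)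
  · exact exists_smaller_of_sq_add_sq hm hn hmo hmn (by linear_combination -hamn) hk

theorem exists_smaller (h : FermatRightTriangle a b c) :
    ∃ a' b' c', FermatRightTriangle a' b' c' ∧ a'.natAbs < a.natAbs := by
  by_cases hab : Int.gcd a b = 1
  · have hab := Int.isCoprime_iff_gcd_eq_one.mpr hab
    rcases Int.emod_two_eq b with hb | hb
    · exact h.exists_smaller_of_even hab hb
    · exact h.exists_smaller_of_odd (h.isCoprime_b_c hab) hb
  · exact h.exists_smaller_of_gcd_ne_one hab

end FermatRightTriangle

theorem not_fermatRightTriangle (a b c : ℤ) : ¬FermatRightTriangle a b c := fun h =>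
  have ⟨a', b', c', h', _⟩ := h.exists_smaller
  not_fermatRightTriangle a' b' c' h'
termination_by a.natAbs

theorem stmt_7 (x y : ℤ) (hx : 0 < x) (hy : 0 < y) :
    x ^ 4 - 2 * y ^ 2 = -1 ↔ x = 1 ∧ y = 1 := by
  constructor
  · intro h
    have hy1 : y ^ 2 - 1 = 0 := by
      by_contra hy1
      exact not_fermatRightTriangle y x _ ⟨hx.ne', hy1, by linear_combination -h⟩
    have hy : y = 1 := (pow_eq_one_iff_of_nonneg hy.le two_ne_zero).mp (by linarith)
    subst hy
    exact ⟨(pow_eq_one_iff_of_nonneg hx.le four_ne_zero).mp (by linarith), rfl⟩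
  · rintro ⟨rfl, rfl⟩
    norm_num
end

section
/- The only squares in the Lucas sequence are L₁ = 1 and L₃ = 4. -/
def lucasSeq : ℕ → ℕ
  | 0 => 2
  | 1 => 1
  | n + 2 => lucasSeq (n + 1) + lucasSeq n

/-- Integer-valued Lucas sequence. -/
def L (n : ℕ) : ℤ := lucasSeq n

lemma L_def (n : ℕ) : L n = (lucasSeq n : ℤ) := rfl

lemma L_add_two (n : ℕ) : L (n + 2) = L (n + 1) + L n := by
  simp [L, lucasSeq]

lemma cassini (m : ℕ) : L (m + 2) * L m - L (m + 1) ^ 2 = 5 * (-1) ^ m := by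
  induction m with
  | zero => decide
  | succ k ih =>
    have h := L_add_two k
    have h2 := L_add_two (k + 1)
    rw [pow_succ]
    linear_combination (-1 : ℤ) * ih + L (k+1) * h2 - L (k+2) * h

lemma lucas_double (m : ℕ) :
    L (2 * m) = L m ^ 2 - 2 * (-1) ^ m ∧ L (2 * m + 1) = L m * L (m + 1) - (-1) ^ m := by
  induction m with
  | zero => decide
  | succ k ih =>
    obtain ⟨h1, h2⟩ := ih
    have hc := cassini k
    have hL1 : L (2 * k + 2) = L (2 * k + 1) + L (2 * k) := L_add_two _
    have hL2 : L (2 * k + 3) = L (2 * k + 2) + L (2 * k + 1) := L_add_two _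
    have hk : L (k + 2) = L (k + 1) + L k := L_add_two _
    constructor
    · rw [show 2 * (k + 1) = 2 * k + 2 by ring, hL1, h1, h2, pow_succ]
      linear_combination hc - L k * hk
    · rw [show 2 * (k + 1) + 1 = 2 * k + 3 by ring, hL2, hL1, h1, h2, pow_succ]
      linear_combination hc - (L (k+1) + L k) * hk

lemma add_formula (m n : ℕ) : L (n + 2 * m) + (-1) ^ m * L n = L (n + m) * L m := by
  induction n using Nat.twoStepInduction with
  | zero =>
    have := (lucas_double m).1
    simp only [Nat.zero_add]
    rw [show L 0 = 2 from rfl]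
    linear_combination this
  | one =>
    have := (lucas_double m).2
    rw [show L 1 = 1 from rfl, show 1 + 2 * m = 2 * m + 1 by ring,
      show 1 + m = m + 1 by ring]
    linear_combination this
  | more k ih1 ih2 =>
    have e1 : L (k + 2 + 2 * m) = L (k + 1 + 2 * m) + L (k + 2 * m) := by
      rw [show k + 2 + 2*m = (k + 2*m) + 2 by ring, L_add_two]; ring_nf
    have e2 : L (k + 2 + m) = L (k + 1 + m) + L (k + m) := by
      rw [show k + 2 + m = (k + m) + 2 by ring, L_add_two]; ring_nf
    have e3 : L (k + 2) = L (k + 1) + L k := L_add_two k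
    rw [e1, e2, e3]
    linear_combination ih1 + ih2

lemma shift_dvd (m s n : ℕ) (hm : Even m) :
    L m ∣ L (n + 2 * m * s) - (-1) ^ s * L n := by
  induction s with
  | zero => simp
  | succ t ih =>
    have key := add_formula m (n + 2 * m * t)
    rw [hm.neg_one_pow] at key
    have e : n + 2 * m * (t + 1) = n + 2 * m * t + 2 * m := by ring
    rw [e]
    have : L (n + 2*m*t + 2*m) - (-1)^(t+1) * L n
        = L (n + 2*m*t + m) * L m - (L (n + 2*m*t) - (-1)^t * L n) := by
      rw [← key]; ring
    rw [this]
    exact dvd_sub (dvd_mul_left _ _) ih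

lemma lucas_pow2_mod (t : ℕ) (ht : 1 ≤ t) : L (2 ^ t) % 4 = 3 := by
  induction t, ht using Nat.le_induction with
  | base => decide
  | succ t ht ih =>
    have hd := (lucas_double (2 ^ t)).1
    have heven : Even (2 ^ t) := Nat.even_pow.mpr ⟨even_two, by omega⟩
    rw [heven.neg_one_pow] at hd
    rw [show 2 ^ (t+1) = 2 * 2 ^ t by rw [pow_succ]; ring, hd]
    obtain ⟨q, hq⟩ : ∃ q, L (2 ^ t) = 4 * q + 3 := ⟨L (2 ^ t) / 4, by omega⟩
    have : L (2 ^ t) ^ 2 - 2 * 1 = 4 * (4 * q ^ 2 + 6 * q + 1) + 3 := by rw [hq]; ring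
    omega

lemma exists_prime_three (N : ℕ) (h : N % 4 = 3) : ∃ p, p.Prime ∧ p % 4 = 3 ∧ p ∣ N := by
  induction N using Nat.strong_induction_on with
  | _ N ih =>
  have hN1 : N ≠ 1 := by omega
  have hpp : N.minFac.Prime := Nat.minFac_prime hN1
  set p := N.minFac with hp
  have hpd : p ∣ N := Nat.minFac_dvd N
  have hodd : N % 2 = 1 := by omega
  have hpodd : p ≠ 2 := by
    rintro h2
    rw [h2] at hpd
    obtain ⟨k, hk⟩ := hpd; omega
  have hp2 : p % 2 = 1 := Nat.odd_iff.mp (hpp.odd_of_ne_two hpodd)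
  rcases Nat.lt_or_ge (p % 4) 3 with hlt | hge
  · have hp4 : p % 4 = 1 := by omega
    obtain ⟨M, hM⟩ := hpd
    have hM4 : M % 4 = 3 := by
      have := Nat.mul_mod p M 4
      rw [← hM, h, hp4] at this
      omega
    have hMlt : M < N := by
      have hp1 : 2 ≤ p := hpp.two_le
      have hM3 : 3 ≤ M := by omega
      nlinarith
    obtain ⟨q, hq, hq4, hqd⟩ := ih M hMlt hM4
    exact ⟨q, hq, hq4, hqd.trans ⟨p, by rw [hM]; ring⟩⟩
  · have : p % 4 = 3 := by omega
    exact ⟨p, hpp, this, hpd⟩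

lemma no_sq_zmod4 : ∀ a b : ZMod 4, a * a ≠ b ^ 2 - 2 ∧ a * a ≠ b ^ 2 + 2 := by decide

theorem stmt_13 (n : ℕ) : IsSquare (lucasSeq n) ↔ n = 1 ∨ n = 3 := by
  constructor
  · rintro ⟨x, hx⟩
    by_contra hcon
    push_neg at hcon
    obtain ⟨hn1, hn3⟩ := hcon
    rcases Nat.even_or_odd n with he | ho
    · -- even index: L_{2m} = L_m² − 2(−1)^m, impossible mod 4
      obtain ⟨m, hm⟩ := he
      have hZ : (x : ℤ) * x = L m ^ 2 - 2 * (-1) ^ m := by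
        have h1 : L n = (x : ℤ) * x := by
          rw [L_def, hx]; push_cast; ring
        have h2 := (lucas_double m).1
        rw [show 2 * m = n by omega] at h2
        rw [← h1, h2]
      have hZ4 := congrArg (Int.cast : ℤ → ZMod 4) hZ
      push_cast at hZ4
      rcases Nat.even_or_odd m with hme | hmo
      · rw [hme.neg_one_pow] at hZ4
        exact (no_sq_zmod4 (x : ZMod 4) ((lucasSeq m : ℕ) : ZMod 4)).1 (by
          rw [hZ4]; push_cast [L_def]; ring)
      · rw [hmo.neg_one_pow] at hZ4
        exact (no_sq_zmod4 (x : ZMod 4) ((lucasSeq m : ℕ) : ZMod 4)).2 (by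
          rw [hZ4]; push_cast [L_def]; ring)
    · -- odd index
      have hn2 : n % 2 = 1 := Nat.odd_iff.mp ho
      obtain ⟨r, hrdef⟩ : ∃ r, r = n % 4 := ⟨n % 4, rfl⟩
      have hr : r = 1 ∨ r = 3 := by omega
      have hrle : r ≤ n := by omega
      obtain ⟨v, hvdef⟩ : ∃ v, v = n - r := ⟨n - r, rfl⟩
      have hv4 : 4 ∣ v := by omega
      have hv0 : v ≠ 0 := by omega
      obtain ⟨a, hadef⟩ : ∃ a, a = v.factorization 2 := ⟨_, rfl⟩
      have ha : 2 ≤ a := by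
        rw [hadef]
        exact (Nat.Prime.pow_dvd_iff_le_factorization Nat.prime_two hv0).mp
          (by rw [show (2:ℕ)^2 = 4 by norm_num]; exact hv4)
      obtain ⟨s, hsdef⟩ : ∃ s, s = v / 2 ^ a := ⟨_, rfl⟩
      have hvs : 2 ^ a * s = v := by
        rw [hsdef, hadef]
        exact Nat.ordProj_mul_ordCompl_eq_self v 2
      have hs_odd : Odd s := by
        have h := Nat.not_dvd_ordCompl Nat.prime_two hv0
        rw [← hadef, ← hsdef] at h
        exact Nat.odd_iff.mpr (by omega)
      obtain ⟨m, hmdef⟩ : ∃ m, m = 2 ^ (a - 1) := ⟨_, rfl⟩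
      have hm_even : Even m := hmdef ▸ Nat.even_pow.mpr ⟨even_two, by omega⟩
      have h2m : 2 * m * s = v := by
        rw [← hvs, hmdef]
        have h1 : 2 * 2 ^ (a - 1) = 2 ^ a := by
          calc 2 * 2 ^ (a - 1) = 2 ^ (a - 1) * 2 := Nat.mul_comm _ _
            _ = 2 ^ (a - 1 + 1) := (pow_succ 2 (a - 1)).symm
            _ = 2 ^ a := by rw [show a - 1 + 1 = a by omega]
        rw [← h1]
      have hn_eq : n = r + 2 * m * s := by omega
      have hdvd := shift_dvd m s r hm_even
      rw [← hn_eq, hs_odd.neg_one_pow] at hdvd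
      have hdvd' : L m ∣ L n + L r := by
        have e : L n + L r = L n - (-1) * L r := by ring
        rw [e]; exact hdvd
      have hm4 : lucasSeq m % 4 = 3 := by
        have := lucas_pow2_mod (a - 1) (by omega)
        rw [← hmdef, L_def] at this
        omega
      obtain ⟨p, hpP, hp4, hpd⟩ := exists_prime_three _ hm4
      haveI : Fact p.Prime := ⟨hpP⟩
      have hpdZ : (p : ℤ) ∣ L n + L r :=
        dvd_trans (by rw [L_def]; exact_mod_cast hpd) hdvd'
      have hcast : ((L n + L r : ℤ) : ZMod p) = 0 :=
        (ZMod.intCast_zmod_eq_zero_iff_dvd _ _).mpr hpdZ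
      have hx2 : (x : ZMod p) * x = - (lucasSeq r : ZMod p) := by
        have h2 : ((lucasSeq n : ℕ) : ZMod p) = (x : ZMod p) * x := by
          exact_mod_cast congrArg (Nat.cast : ℕ → ZMod p) hx
        rw [L_def, L_def] at hcast
        push_cast at hcast
        rw [h2] at hcast
        linear_combination hcast
      rcases hr with hre | hre
      · rw [hre] at hx2
        have hone : (lucasSeq 1 : ZMod p) = 1 := by norm_num [lucasSeq]
        rw [hone] at hx2
        have hsq : IsSquare (-1 : ZMod p) := ⟨x, hx2.symm⟩
        exact (ZMod.exists_sq_eq_neg_one_iff.mp hsq) hp4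
      · rw [hre] at hx2
        have hfour : (lucasSeq 3 : ZMod p) = 4 := by norm_num [lucasSeq]
        rw [hfour] at hx2
        have hp2 : p ≠ 2 := by omega
        have h2ne : (2 : ZMod p) ≠ 0 := by
          intro h
          have h' : ((2:ℕ) : ZMod p) = 0 := by exact_mod_cast h
          rw [ZMod.natCast_eq_zero_iff] at h'
          exact hp2 ((Nat.prime_dvd_prime_iff_eq hpP Nat.prime_two).mp h')
        have hsq : IsSquare (-1 : ZMod p) := by
          refine ⟨x * 2⁻¹, ?_⟩
          field_simp
          linear_combination -hx2
        exact (ZMod.exists_sq_eq_neg_one_iff.mp hsq) hp4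
  · rintro (rfl | rfl)
    · exact ⟨1, rfl⟩
    · exact ⟨2, rfl⟩
end

section
/- The positive integer solutions (x, y) of the equation 2x² + 1 = 3^y are exactly (1, 1), (2, 2), and (11, 5). -/
/-!
For even `y = 2m` the pair `(3^m, x)` solves the Pell equation `u² = 2v² + 1`, and for odd
`y = 2m - 1` the pair `(3^m, x)` solves `u² = 6v² + 3`. Descending along the automorphisms
`3 + 2√2` and `5 + 2√6` of these forms, every solution is an iterate of a single minimal one,
`(1, 0)` resp. `(3, 1)`. Modulo `297 = 27 · 11` resp. `1377 = 81 · 17` these orbits are periodic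
and their first coordinates avoid `3^m` for `m ≥ 2` resp. `m ≥ 4`, which leaves `y ≤ 5`.
-/

/-- Multiplication of `u + v√d` by `p + q√d`; an automorphism of `u² - d v²` when
`p² = d q² + 1`. -/
def pellStep (d p q : ℕ) {R : Type*} [Semiring R] (s : R × R) : R × R :=
  (p * s.1 + d * q * s.2, q * s.1 + p * s.2)

theorem natCast_pellStep_iterate {R : Type*} [Semiring R] (d p q n : ℕ) (s : ℕ × ℕ) :
    Prod.map Nat.cast Nat.cast ((pellStep d p q)^[n] s) =
      (pellStep d p q)^[n] (Prod.map (Nat.cast : ℕ → R) Nat.cast s) := by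
  refine (Function.Semiconj.iterate_right (fun s => ?_) n) s
  simp [pellStep]

section descent

variable {d p q k u v : ℕ}

theorem exists_pellStep_eq_of_sq_le (hpq : p ^ 2 = d * q ^ 2 + 1) (hq : 0 < q) (hk : 0 < k)
    (h : u ^ 2 = d * v ^ 2 + k) (hv : q ^ 2 * k ≤ v ^ 2) :
    ∃ u' v', u' ^ 2 = d * v' ^ 2 + k ∧ v' < v ∧ pellStep d p q (u', v') = (u, v) := by
  have hqu : q * u ≤ p * v :=
    (Nat.pow_le_pow_iff_left two_ne_zero).1 (by rw [mul_pow, mul_pow, h, hpq]; nlinarith)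
  have hdv : d * q * v ≤ p * u :=
    (Nat.pow_le_pow_iff_left two_ne_zero).1 (by rw [mul_pow, mul_pow, mul_pow, h, hpq]; nlinarith)
  have hpv : p * v < v + q * u := by
    refine (Nat.pow_lt_pow_iff_left two_ne_zero).1 ?_
    rw [add_sq, mul_pow, mul_pow, h, hpq]
    linarith [mul_pos (pow_pos hq 2) hk, Nat.zero_le (2 * v * (q * u))]
  have hpq' : (p : ℤ) ^ 2 = d * q ^ 2 + 1 := by exact_mod_cast hpq
  refine ⟨p * u - d * q * v, p * v - q * u, ?_, by omega, ?_⟩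
  · have h' : (u : ℤ) ^ 2 = d * v ^ 2 + k := by exact_mod_cast h
    zify [hqu, hdv]
    linear_combination ((u : ℤ) ^ 2 - d * v ^ 2) * hpq' + h'
  · simp only [pellStep, Prod.mk.injEq]
    zify [hqu, hdv]
    exact ⟨by linear_combination (u : ℤ) * hpq', by linear_combination (v : ℤ) * hpq'⟩

theorem exists_pellStep_iterate_eq (hpq : p ^ 2 = d * q ^ 2 + 1) (hq : 0 < q) (hk : 0 < k)
    (h : u ^ 2 = d * v ^ 2 + k) :
    ∃ n u₀ v₀, u₀ ^ 2 = d * v₀ ^ 2 + k ∧ v₀ ^ 2 < q ^ 2 * k ∧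
      (pellStep d p q)^[n] (u₀, v₀) = (u, v) := by
  induction v using Nat.strong_induction_on generalizing u with
  | _ v ih =>
    rcases lt_or_ge (v ^ 2) (q ^ 2 * k) with hv | hv
    · exact ⟨0, u, v, h, hv, rfl⟩
    obtain ⟨u', v', h', hv', hstep⟩ := exists_pellStep_eq_of_sq_le hpq hq hk h hv
    obtain ⟨n, u₀, v₀, h₀, hv₀, hn⟩ := ih v' hv' h'
    exact ⟨n + 1, u₀, v₀, h₀, hv₀, by rw [Function.iterate_succ_apply', hn, hstep]⟩

end descent

theorem le_of_iterate_fst_eq_pow {M : Type*} [Monoid M] {f : M × M → M × M} {s : M × M} {a : M}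
    {t c e b : ℕ} (ht : 0 < t) (he : 0 < e) (hs : Function.IsPeriodicPt f t s)
    (ha : Function.IsPeriodicPt (a * ·) e (a ^ c)) (hbc : b < c)
    (hcheck : ∀ n < t, ∀ m < c + e, (f^[n] s).1 = a ^ m → m ≤ b) {n m : ℕ}
    (h : (f^[n] s).1 = a ^ m) : m ≤ b := by
  rw [← hs.iterate_mod_apply] at h
  rcases lt_or_ge m c with hmc | hmc
  · exact hcheck _ (Nat.mod_lt _ ht) m (by omega) h
  have hpow : a ^ m = a ^ (c + (m - c) % e) := by
    have key := ha.iterate_mod_apply (m := m - c)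
    simp only [mul_left_iterate, ← pow_add] at key
    rwa [Nat.sub_add_cancel hmc, add_comm, eq_comm] at key
  have := hcheck _ (Nat.mod_lt _ ht) _ (by have := Nat.mod_lt (m - c) he; omega) (h.trans hpow)
  omega

theorem le_one_of_three_pow_sq_eq {m x : ℕ} (h : (3 ^ m) ^ 2 = 2 * x ^ 2 + 1) : m ≤ 1 := by
  obtain ⟨n, u₀, v₀, h₀, hv₀, hn⟩ :=
    exists_pellStep_iterate_eq (p := 3) (q := 2) (by norm_num) (by norm_num) (by norm_num) h
  have hbase : (u₀, v₀) = (1, 0) := by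
    have : v₀ < 2 := by nlinarith
    have : u₀ < 2 := by nlinarith
    interval_cases v₀ <;> interval_cases u₀ <;> first | rfl | norm_num at h₀
  have hcast := congrArg (Prod.map (Nat.cast : ℕ → ZMod 297) (Nat.cast : ℕ → ZMod 297)) hn
  rw [hbase, natCast_pellStep_iterate] at hcast
  have hfst : ((pellStep 2 3 2)^[n] ((1, 0) : ZMod 297 × ZMod 297)).1 = 3 ^ m := by
    simpa using congrArg Prod.fst hcast
  exact le_of_iterate_fst_eq_pow (t := 36) (c := 3) (e := 5) (by norm_num) (by norm_num)
    (by decide) (by decide) (by norm_num) (by decide) hfst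

theorem le_three_of_three_pow_sq_eq {m x : ℕ} (h : (3 ^ m) ^ 2 = 6 * x ^ 2 + 3) : m ≤ 3 := by
  obtain ⟨n, u₀, v₀, h₀, hv₀, hn⟩ :=
    exists_pellStep_iterate_eq (p := 5) (q := 2) (by norm_num) (by norm_num) (by norm_num) h
  have hbase : (u₀, v₀) = (3, 1) := by
    have : v₀ < 4 := by nlinarith
    have : u₀ < 8 := by nlinarith
    interval_cases v₀ <;> interval_cases u₀ <;> first | rfl | norm_num at h₀
  have hcast := congrArg (Prod.map (Nat.cast : ℕ → ZMod 1377) (Nat.cast : ℕ → ZMod 1377)) hn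
  rw [hbase, natCast_pellStep_iterate] at hcast
  have hfst : ((pellStep 6 5 2)^[n] ((3, 1) : ZMod 1377 × ZMod 1377)).1 = 3 ^ m := by
    simpa using congrArg Prod.fst hcast
  exact le_of_iterate_fst_eq_pow (t := 18) (c := 4) (e := 16) (by norm_num) (by norm_num)
    (by decide) (by decide) (by norm_num) (by decide) hfst

theorem le_five_of_two_mul_sq_add_one_eq_three_pow {x y : ℕ} (h : 2 * x ^ 2 + 1 = 3 ^ y) :
    y ≤ 5 := by
  obtain ⟨m, rfl | rfl⟩ := Nat.even_or_odd' y
  · have := le_one_of_three_pow_sq_eq (m := m) (x := x) (by rw [← pow_mul, mul_comm, h])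
    omega
  · have := le_three_of_three_pow_sq_eq (m := m + 1) (x := x)
      (by rw [← pow_mul, show (m + 1) * 2 = 2 * m + 1 + 1 by ring, pow_succ, ← h]; ring)
    omega

theorem stmt_14_general (x y : ℕ) (hx : 0 < x) :
    2 * x ^ 2 + 1 = 3 ^ y ↔ (x, y) = (1, 1) ∨ (x, y) = (2, 2) ∨ (x, y) = (11, 5) := by
  constructor
  · intro h
    have hy := le_five_of_two_mul_sq_add_one_eq_three_pow h
    have hx12 : x < 12 := by
      have : 3 ^ y ≤ 3 ^ 5 := Nat.pow_le_pow_right (by norm_num) hy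
      nlinarith
    interval_cases y <;> interval_cases x <;> simp_all
  · rintro (h | h | h) <;> obtain ⟨rfl, rfl⟩ := Prod.mk.inj h <;> norm_num

theorem stmt_14 (x y : ℕ) (hx : 0 < x) (hy : 0 < y) :
    2 * x ^ 2 + 1 = 3 ^ y ↔ (x, y) = (1, 1) ∨ (x, y) = (2, 2) ∨ (x, y) = (11, 5) :=
  stmt_14_general x y hx
end

section
/- Let n be an integer greater than 2, k an integer greater than 1, and x a positive odd integer with gcd(k, x) = 1 and x² < 4k^n. Write x² - 4k^n = a²d with a a positive integer and d a squarefree integer less than -3. If k^n < (1 - d)²/16, then n divides h(d). -/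
/-!
Put `β = (x + a√d)/2`, an algebraic integer with `β (x - β) = kⁿ`. Since `β + (x - β) = x` is
coprime to `k`, the ideal `I = (k, β)` satisfies `Iⁿ = (β)`. If `n` does not divide the class
number, the class of `I` has order `e < n`, and `β = γᵗ ε` with `t = n / e ≥ 2`, `ε` a unit and
`N γ = kᵉ`. Write `2γ = u + v√d`, so that `u² - d v² = 4kᵉ`. If `u = 0` then `d ∣ 4kᵉ`, impossible
as `d` is coprime to `k` (a common prime factor would divide `x`); if `u, v ≠ 0` then
`1 - d ≤ 4kᵉ`, so `(1 - d)² ≤ 16k²ᵉ ≤ 16kⁿ`, against the hypothesis. Hence `v = 0` and `γ` is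
rational; so is `ε`, because `d < -4`, and then so is `β`, which is absurd.
-/

open NumberField

theorem Squarefree.exists_intCast_eq_of_mul_sq_eq_intCast {d : ℤ} (hd : Squarefree d) {r : ℚ}
    {m : ℤ} (h : d * r ^ 2 = m) : ∃ v : ℤ, (v : ℚ) = r := by
  have key : d * r.num ^ 2 = m * (r.den : ℤ) ^ 2 := by
    rw [← Rat.num_div_den r] at h
    field_simp at h
    rw [mul_comm m]
    exact_mod_cast h
  have hu : IsUnit (r.den : ℤ) := hd _ <| by
    rw [← pow_two]
    exact r.isCoprime_num_den.pow.symm.dvd_of_dvd_mul_right ⟨m, by rw [key, mul_comm]⟩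
  exact ⟨r.num, Rat.coe_int_num_of_den_eq_one (by simpa using Int.ofNat_isUnit.1 hu)⟩

theorem Int.isCoprime_of_sq_sub_four_mul_pow_eq {k x a d : ℤ} {n : ℕ} (hn : n ≠ 0)
    (hkx : IsCoprime k x) (h : x ^ 2 - 4 * k ^ n = a ^ 2 * d) : IsCoprime k d := by
  have : IsCoprime k (a ^ 2 * d + k * (4 * k ^ (n - 1))) := by
    convert hkx.pow_right (n := 2) using 1
    obtain ⟨m, rfl⟩ := Nat.exists_eq_add_one_of_ne_zero hn
    rw [Nat.add_sub_cancel]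
    linear_combination -h
  exact (IsCoprime.add_mul_left_right_iff.1 this).of_mul_right_right

theorem Int.eq_zero_of_sq_sub_mul_sq_eq_four_mul_pow {d k u v : ℤ} {e n : ℕ}
    (hdk : IsCoprime d k) (hd : d < -4) (hk : 1 ≤ k) (hen : 2 * e ≤ n)
    (hbound : 16 * k ^ n < (1 - d) ^ 2) (h : u ^ 2 - d * v ^ 2 = 4 * k ^ e) : v = 0 := by
  by_contra hv
  have hv2 : 0 < v ^ 2 := by positivity
  rcases eq_or_ne u 0 with rfl | hu
  · have hd4 : d ∣ 4 := hdk.pow_right.dvd_of_dvd_mul_right ⟨-v ^ 2, by linear_combination -h⟩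
    have := Int.le_of_dvd (by norm_num) (neg_dvd.2 hd4)
    omega
  · have hu2 : 0 < u ^ 2 := by positivity
    have hke : 1 - d ≤ 4 * k ^ e := by nlinarith
    have hkn : k ^ (e * 2) ≤ k ^ n := pow_le_pow_right₀ hk (by omega)
    nlinarith [pow_mul k e 2]

theorem isIntegral_of_mul_sub_eq {R A : Type*} [CommRing R] [CommRing A] [Algebra R A] {β : A}
    (s t : R) (h : β * (algebraMap R A s - β) = algebraMap R A t) : IsIntegral R β := by
  refine ⟨Polynomial.X ^ 2 - Polynomial.C s * Polynomial.X + Polynomial.C t, by monicity!, ?_⟩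
  simp only [Polynomial.eval₂_add, Polynomial.eval₂_sub, Polynomial.eval₂_mul,
    Polynomial.eval₂_pow, Polynomial.eval₂_X, Polynomial.eval₂_C]
  linear_combination -h

open Ideal in
theorem Ideal.span_pair_pow_eq_span_of_mul_eq_pow {R : Type*} [CommRing R] [IsDedekindDomain R]
    {κ B C : R} {n : ℕ} (hn : n ≠ 0) (hBC : B * C = κ ^ n) (hcop : IsCoprime κ (B + C)) :
    span {κ, B} ^ n = span {B} := by
  obtain ⟨y, z, hyz⟩ := hcop
  have hIJ : span {κ, B} * span {κ, C} = span {κ} := by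
    rw [span_pair_mul_span_pair]
    refine le_antisymm ?_ ?_
    · simp only [span_insert, sup_le_iff, span_singleton_le_span_singleton]
      exact ⟨dvd_mul_right _ _, dvd_mul_right _ _, dvd_mul_left _ _, hBC ▸ dvd_pow_self κ hn⟩
    · have hmem : y * (κ * κ) + z * (κ * C) + z * (B * κ) ∈ span {κ * κ, κ * C, B * κ, B * C} := by
        refine add_mem (add_mem ?_ ?_) ?_ <;> exact mul_mem_left _ _ (subset_span (by simp))
      rw [span_singleton_le_iff_mem]
      convert hmem using 1
      linear_combination -κ * hyz
  have hBJ : IsCoprime (span {B}) (span {κ, C}) := by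
    rw [isCoprime_iff_sup_eq, eq_top_iff_one, Submodule.mem_sup]
    exact ⟨z * B, mul_mem_left _ _ (mem_span_singleton_self B), y * κ + z * C,
      mem_span_pair.2 ⟨y, z, rfl⟩, by linear_combination hyz⟩
  have hCI : IsCoprime (span {κ, B}) (span {C}) := by
    rw [isCoprime_iff_sup_eq, eq_top_iff_one, Submodule.mem_sup]
    exact ⟨y * κ + z * B, mem_span_pair.2 ⟨y, z, rfl⟩, z * C,
      mul_mem_left _ _ (mem_span_singleton_self C), by linear_combination hyz⟩
  have hprod : span {B} * span {C} = span {κ, B} ^ n * span {κ, C} ^ n := by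
    rw [← mul_pow, hIJ, span_singleton_pow, ← hBC, span_singleton_mul_span_singleton]
  exact dvd_antisymm (hCI.pow_left.dvd_of_dvd_mul_right ⟨_, hprod⟩)
    (hBJ.pow_right.dvd_of_dvd_mul_right ⟨_, hprod.symm⟩)

open Ideal nonZeroDivisors in
theorem ClassGroup.exists_associated_pow_of_not_dvd_card {R : Type*} [CommRing R]
    [IsDedekindDomain R] [Fintype (ClassGroup R)] {I : Ideal R} (hI : I ≠ ⊥) {n : ℕ} (hn : n ≠ 0)
    {B : R} (hB : I ^ n = span {B}) (hdvd : ¬ n ∣ Fintype.card (ClassGroup R)) :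
    ∃ e t : ℕ, 2 ≤ t ∧ e * t = n ∧ ∃ γ : R, Associated (γ ^ t) B := by
  have hI0 : I ∈ (Ideal R)⁰ := mem_nonZeroDivisors_of_ne_zero hI
  set g := ClassGroup.mk0 ⟨I, hI0⟩
  have hpow (m : ℕ) : g ^ m = ClassGroup.mk0 ⟨I ^ m, pow_mem hI0 m⟩ := by
    rw [← map_pow]; rfl
  obtain ⟨t, ht⟩ : orderOf g ∣ n := orderOf_dvd_of_pow_eq_one <| by
    rw [hpow, ClassGroup.mk0_eq_one_iff]; exact ⟨⟨B, hB⟩⟩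
  obtain ⟨γ, hγ⟩ :=
    ((ClassGroup.mk0_eq_one_iff _).1 ((hpow _).symm.trans (pow_orderOf_eq_one g))).principal
  refine ⟨orderOf g, t, ?_, ht.symm, γ, ?_⟩
  · by_contra! ht2
    interval_cases t
    · exact hn (by simpa using ht)
    · exact hdvd (by rw [ht, mul_one]; exact orderOf_dvd_card)
  · rw [← span_singleton_eq_span_singleton, ← span_singleton_pow, ← submodule_span_eq, ← hγ,
      ← pow_mul, ← ht, hB]

section SqrtCoordinates

variable {K : Type*} [Field K] [CharZero K] {d : ℤ} {α : K}

theorem ratCast_ne_of_sq_eq_of_neg (hα : α ^ 2 = d) (hd : d < 0) (r : ℚ) : (r : K) ≠ α := by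
  rintro rfl
  have hr : r ^ 2 = d := by exact_mod_cast hα
  have : (d : ℚ) < 0 := by exact_mod_cast hd
  nlinarith [sq_nonneg r]

theorem rat_add_rat_mul_notMem_bot (hα : α ^ 2 = d) (hd : d < 0) (p : ℚ) {q : ℚ} (hq : q ≠ 0) :
    (p : K) + q * α ∉ (⊥ : Subalgebra ℚ K) := by
  intro h
  obtain ⟨r, hr⟩ := Algebra.mem_bot.1 h
  refine ratCast_ne_of_sq_eq_of_neg hα hd ((r - p) / q) ?_
  rw [eq_ratCast] at hr
  push_cast
  field_simp
  linear_combination hr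

theorem mem_bot_of_two_mul_eq_intCast {z : K} {u : ℤ} (h : 2 * z = u) :
    z ∈ (⊥ : Subalgebra ℚ K) :=
  Algebra.mem_bot.2 ⟨u / 2, by rw [eq_ratCast]; push_cast; linear_combination -h / 2⟩

theorem linearIndependent_one_sqrt (hα : α ^ 2 = d) (hd : d < 0) :
    LinearIndependent ℚ ![1, α] :=
  (LinearIndependent.pair_iff' one_ne_zero).2 fun r => by
    rw [Rat.smul_one_eq_cast]; exact ratCast_ne_of_sq_eq_of_neg hα hd r

variable (hα : α ^ 2 = d) (hd : d < 0) (hrank : Module.finrank ℚ K = 2)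

noncomputable def sqrtBasis : Module.Basis (Fin 2) ℚ K :=
  basisOfLinearIndependentOfCardEqFinrank (linearIndependent_one_sqrt hα hd) (by simp [hrank])

theorem coe_sqrtBasis : ⇑(sqrtBasis hα hd hrank) = ![1, α] :=
  coe_basisOfLinearIndependentOfCardEqFinrank ..

theorem sqrtBasis_repr (p q : ℚ) :
    ⇑((sqrtBasis hα hd hrank).repr ((p : K) + q * α)) = ![p, q] := by
  convert (sqrtBasis hα hd hrank).repr_sum_self ![p, q]
  simp [coe_sqrtBasis, Fin.sum_univ_two, Rat.smul_def]

include hα hd hrank in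
theorem exists_eq_rat_add_rat_mul (z : K) : ∃ p q : ℚ, z = p + q * α := by
  refine ⟨(sqrtBasis hα hd hrank).repr z 0, (sqrtBasis hα hd hrank).repr z 1, ?_⟩
  conv_lhs => rw [← (sqrtBasis hα hd hrank).sum_repr z]
  simp [coe_sqrtBasis, Fin.sum_univ_two, Rat.smul_def]

theorem leftMulMatrix_sqrtBasis (p q : ℚ) :
    Algebra.leftMulMatrix (sqrtBasis hα hd hrank) ((p : K) + q * α) = !![p, d * q; q, p] := by
  have hmul : ((p : K) + q * α) * α = ((d * q : ℚ) : K) + p * α := by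
    push_cast; linear_combination (q : K) * hα
  ext i j
  fin_cases i <;> fin_cases j <;>
    simp [Algebra.leftMulMatrix_eq_repr_mul, coe_sqrtBasis, hmul, sqrtBasis_repr, -map_add,
      -Rat.cast_mul]

include hα hd hrank in
theorem norm_rat_add_rat_mul (p q : ℚ) :
    Algebra.norm ℚ ((p : K) + q * α) = p ^ 2 - d * q ^ 2 := by
  rw [Algebra.norm_eq_matrix_det (sqrtBasis hα hd hrank), leftMulMatrix_sqrtBasis,
    Matrix.det_fin_two_of]
  ring

include hα hd hrank in
theorem trace_rat_add_rat_mul (p q : ℚ) :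
    Algebra.trace ℚ K ((p : K) + q * α) = 2 * p := by
  rw [Algebra.trace_eq_matrix_trace (sqrtBasis hα hd hrank), leftMulMatrix_sqrtBasis,
    Matrix.trace_fin_two_of]
  ring

end SqrtCoordinates

section RingOfIntegers

variable {K : Type*} [Field K] [NumberField K] {d : ℤ} {α : K}

section

variable (hα : α ^ 2 = d) (hd : d < 0) (hrank : Module.finrank ℚ K = 2)
include hα hd hrank

theorem exists_two_mul_eq_int_add_int_mul (hsq : Squarefree d) (z : 𝓞 K) :
    ∃ u v : ℤ, 2 * (z : K) = u + v * α ∧ u ^ 2 - d * v ^ 2 = 4 * Algebra.norm ℤ z := by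
  obtain ⟨p, q, hz⟩ := exists_eq_rat_add_rat_mul hα hd hrank (z : K)
  have htr : (Algebra.trace ℤ (𝓞 K) z : ℚ) = 2 * p := by
    rw [Algebra.coe_trace_int, hz, trace_rat_add_rat_mul hα hd hrank]
  have hN : (Algebra.norm ℤ z : ℚ) = p ^ 2 - d * q ^ 2 := by
    rw [Algebra.coe_norm_int, hz, norm_rat_add_rat_mul hα hd hrank]
  set u := Algebra.trace ℤ (𝓞 K) z
  obtain ⟨v, hv⟩ := hsq.exists_intCast_eq_of_mul_sq_eq_intCast (r := 2 * q)
    (m := u ^ 2 - 4 * Algebra.norm ℤ z) (by push_cast; rw [htr, hN]; ring)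
  refine ⟨u, v, ?_, ?_⟩
  · rw [hz, ← Rat.cast_intCast u, ← Rat.cast_intCast v, htr, hv]
    push_cast; ring
  · have : (u : ℚ) ^ 2 - d * (v : ℚ) ^ 2 = 4 * (Algebra.norm ℤ z : ℚ) := by
      rw [htr, hv, hN]; ring
    exact_mod_cast this

theorem norm_int_nonneg (z : 𝓞 K) : 0 ≤ Algebra.norm ℤ z := by
  obtain ⟨p, q, hz⟩ := exists_eq_rat_add_rat_mul hα hd hrank (z : K)
  have hN : (Algebra.norm ℤ z : ℚ) = p ^ 2 - d * q ^ 2 := by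
    rw [Algebra.coe_norm_int, hz, norm_rat_add_rat_mul hα hd hrank]
  have : (d : ℚ) < 0 := by exact_mod_cast hd
  have : (0 : ℚ) ≤ Algebra.norm ℤ z := by rw [hN]; nlinarith [sq_nonneg p, sq_nonneg q]
  exact_mod_cast this

theorem norm_int_eq_one_of_isUnit {ε : 𝓞 K} (hε : IsUnit ε) : Algebra.norm ℤ ε = 1 := by
  rcases Int.isUnit_iff.1 (hε.map (Algebra.norm ℤ)) with h | h
  · exact h
  · linarith [norm_int_nonneg hα hd hrank ε]

theorem norm_int_eq_pow_of_associated {γ B : 𝓞 K} {k : ℤ} {e t : ℕ} (hk : 0 ≤ k) (ht : t ≠ 0)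
    (hγB : Associated (γ ^ t) B) (hB : Algebra.norm ℤ B = k ^ (e * t)) :
    Algebra.norm ℤ γ = k ^ e := by
  obtain ⟨ε, hε⟩ := hγB
  refine (pow_left_inj₀ (norm_int_nonneg hα hd hrank γ) (pow_nonneg hk e) ht).1 ?_
  rw [← map_pow, ← mul_one (Algebra.norm ℤ (γ ^ t)),
    ← norm_int_eq_one_of_isUnit hα hd hrank ε.isUnit, ← map_mul, hε, hB, pow_mul]

theorem exists_coe_eq_half_add_half_mul {x k a : ℤ} {n : ℕ}
    (h : x ^ 2 - 4 * k ^ n = a ^ 2 * d) :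
    ∃ B : 𝓞 K, (B : K) = ((x / 2 : ℚ) : K) + ((a / 2 : ℚ) : K) * α ∧
      B * (x - B) = k ^ n ∧ Algebra.norm ℤ B = k ^ n := by
  set β : K := ((x / 2 : ℚ) : K) + ((a / 2 : ℚ) : K) * α with hβdef
  have hK : (x : K) ^ 2 - 4 * (k : K) ^ n = a ^ 2 * d := by
    exact_mod_cast congrArg (Int.cast : ℤ → K) h
  have hβ : β * ((x : K) - β) = (k : K) ^ n := by
    rw [hβdef]; push_cast; linear_combination (1 / 4 : K) * hK - (a ^ 2 / 4 : K) * hα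
  let B : 𝓞 K := ⟨β, isIntegral_of_mul_sub_eq x (k ^ n) (by simpa using hβ)⟩
  refine ⟨B, rfl, RingOfIntegers.coe_injective ?_, ?_⟩
  · rw [map_mul, map_sub, map_pow, map_intCast, map_intCast]; exact hβ
  · have hQ : (x : ℚ) ^ 2 - 4 * (k : ℚ) ^ n = a ^ 2 * d := by exact_mod_cast h
    have : (Algebra.norm ℤ B : ℚ) = (k : ℚ) ^ n := by
      rw [Algebra.coe_norm_int, show (B : K) = β from rfl, norm_rat_add_rat_mul hα hd hrank]
      linear_combination hQ / 4
    exact_mod_cast this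

end

theorem coe_mem_bot_of_norm_eq_pow (hα : α ^ 2 = d) (hd : d < -4)
    (hrank : Module.finrank ℚ K = 2) (hsq : Squarefree d) {k : ℤ} {e n : ℕ} (hdk : IsCoprime d k)
    (hk : 1 ≤ k) (hen : 2 * e ≤ n) (hbound : 16 * k ^ n < (1 - d) ^ 2) {z : 𝓞 K}
    (hz : Algebra.norm ℤ z = k ^ e) : (z : K) ∈ (⊥ : Subalgebra ℚ K) := by
  obtain ⟨u, v, h2z, huv⟩ := exists_two_mul_eq_int_add_int_mul hα (by omega) hrank hsq z
  rw [hz] at huv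
  obtain rfl := Int.eq_zero_of_sq_sub_mul_sq_eq_four_mul_pow hdk hd hk hen hbound huv
  exact mem_bot_of_two_mul_eq_intCast (by simpa using h2z)

theorem coe_mem_bot_of_isUnit (hα : α ^ 2 = d) (hd : d < -4) (hrank : Module.finrank ℚ K = 2)
    (hsq : Squarefree d) {ε : 𝓞 K} (hε : IsUnit ε) : (ε : K) ∈ (⊥ : Subalgebra ℚ K) := by
  obtain ⟨u, v, h2ε, huv⟩ := exists_two_mul_eq_int_add_int_mul hα (by omega) hrank hsq ε
  rw [norm_int_eq_one_of_isUnit hα (by omega) hrank hε] at huv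
  obtain rfl : v = 0 := by nlinarith [sq_nonneg u, sq_nonneg v]
  exact mem_bot_of_two_mul_eq_intCast (by simpa using h2ε)

end RingOfIntegers

theorem stmt_18_general (n k x : ℕ) (hn : 2 < n) (hk : 1 < k)
    (hgcd : Nat.gcd k x = 1)
    (d a : ℤ) (ha : 0 < a) (hd : Squarefree d) (hd3 : d < -3)
    (hda : (x : ℤ) ^ 2 - 4 * (k : ℤ) ^ n = a ^ 2 * d)
    (hbound : ((k : ℚ)) ^ n < ((1 : ℚ) - (d : ℚ)) ^ 2 / 16)
    (K : Type) [Field K] [NumberField K] (α : K) (hα : α ^ 2 = (d : K))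
    (hrank : Module.finrank ℚ K = 2) :
    (n : ℕ) ∣ NumberField.classNumber K := by
  have hn0 : n ≠ 0 := by omega
  have hd4 : d < -4 := lt_of_le_of_ne (by omega) fun h => by
    subst h; have := Int.isUnit_iff.1 (hd 2 ⟨-1, by norm_num⟩); omega
  have hkx : IsCoprime (k : ℤ) x := Int.isCoprime_iff_gcd_eq_one.2 hgcd
  obtain ⟨B, hBβ, hBC, hNB⟩ := exists_coe_eq_half_add_half_mul hα (by omega) hrank hda
  have hspan := Ideal.span_pair_pow_eq_span_of_mul_eq_pow hn0 hBC
    (by simpa using hkx.map (Int.castRingHom (𝓞 K)))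
  by_contra hdvd
  obtain ⟨e, t, ht, rfl, γ, ε, hε⟩ :=
    ClassGroup.exists_associated_pow_of_not_dvd_card (by simp [show k ≠ 0 by omega]) hn0 hspan hdvd
  have hNγ := norm_int_eq_pow_of_associated hα (by omega) hrank (by omega) (by omega) ⟨ε, hε⟩ hNB
  have hbZ : 16 * (k : ℤ) ^ (e * t) < (1 - d) ^ 2 := by
    have h : (16 : ℚ) * (k : ℚ) ^ (e * t) < (1 - (d : ℚ)) ^ 2 := by linarith
    exact_mod_cast h
  have hdk : IsCoprime d k := (Int.isCoprime_of_sq_sub_four_mul_pow_eq hn0 hkx hda).symm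
  have hγ := coe_mem_bot_of_norm_eq_pow hα hd4 hrank hd hdk (by omega) (by nlinarith) hbZ hNγ
  have hεQ := coe_mem_bot_of_isUnit hα hd4 hrank hd ε.isUnit
  refine rat_add_rat_mul_notMem_bot hα (by omega) ((x : ℤ) / 2) (q := a / 2) (by positivity) ?_
  rw [← hBβ, ← hε]
  push_cast
  exact mul_mem (pow_mem hγ t) hεQ

theorem stmt_18 (n k x : ℕ) (hn : 2 < n) (hk : 1 < k) (hx : 0 < x) (hxodd : Odd x)
    (hgcd : Nat.gcd k x = 1) (hlt : (x : ℤ) ^ 2 < 4 * (k : ℤ) ^ n)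
    (d a : ℤ) (ha : 0 < a) (hd : Squarefree d) (hd3 : d < -3)
    (hda : (x : ℤ) ^ 2 - 4 * (k : ℤ) ^ n = a ^ 2 * d)
    (hbound : ((k : ℚ)) ^ n < ((1 : ℚ) - (d : ℚ)) ^ 2 / 16)
    (K : Type) [Field K] [NumberField K] (α : K) (hα : α ^ 2 = (d : K))
    (hrank : Module.finrank ℚ K = 2) :
    (n : ℕ) ∣ NumberField.classNumber K :=
  stmt_18_general n k x hn hk hgcd d a ha hd hd3 hda hbound K α hα hrank
end
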